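/- arXiv:1211.7339 — 4 statements merged into one kernel-verified Lean document; each statement's English description precedes it below -/
import Mathlib

section
/- Let (W,S) be a Coxeter system and let 𝒮^f be the set of subsets X of S such that the standard parabolic subgroup W_X is finite. Define a relation ⪯ on W × 𝒮^f by (u,X) ⪯ (v,Y) if and only if X ⊆ Y, v⁻¹u ∈ W_Y, and v⁻¹u has minimal length in the coset (v⁻¹u)W_X. Then ⪯ is a partial order relation on W × 𝒮^f. -/
/-- The standard parabolic subgroup `W_X` of a Coxeter system, generated by the
simple reflections indexed by `X`. -/
def CoxeterSystem.parabolic {B W : Type*} [Group W] {M : CoxeterMatrix B}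
    (cs : CoxeterSystem M W) (X : Set B) : Subgroup W :=
  Subgroup.closure (cs.simple '' X)

/-- `w` is `(∅,X)`-minimal: it has minimal length in the coset `w W_X`. -/
def CoxeterSystem.IsMinimalCosetRep {B W : Type*} [Group W] {M : CoxeterMatrix B}
    (cs : CoxeterSystem M W) (X : Set B) (w : W) : Prop :=
  ∀ u ∈ cs.parabolic X, cs.length w ≤ cs.length (w * u)

/-! For `w` of minimal length in `w W_Y` and `c ∈ W_Y`, length is additive: `ℓ (w c) = ℓ w + ℓ c`.
Transitivity of `⪯` follows at once, and antisymmetry from the fact that the only element of `W_X`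
that is minimal in its coset `w W_X` is `1`.

Additivity is proved by induction on a word for `c`, using the exchange condition. The exchange
condition in turn comes from Tits' sign representation of `W` on `W × {±1}`, in which `s` acts by
`(t, ε) ↦ (s t s, ±ε)`, the sign changing exactly when `t = s`: it shows that the parity of the
number of occurrences of `t` in the left inversion sequence of a word depends only on the element
of `W` the word represents. -/

namespace CoxeterSystem

open List

variable {B W : Type*} [Group W] {M : CoxeterMatrix B} (cs : CoxeterSystem M W)

local prefix:100 "s" => cs.simple
local prefix:100 "π" => cs.wordProd
local prefix:100 "ℓ" => cs.length
local prefix:100 "ris " => cs.rightInvSeq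
local prefix:100 "lis " => cs.leftInvSeq

theorem prod_map_alternatingWord_two_mul {G : Type*} [Monoid G] (f : B → G) (a b : B) (m : ℕ) :
    ((alternatingWord a b (2 * m)).map f).prod = (f a * f b) ^ m := by
  induction m with
  | zero => simp [alternatingWord]
  | succ m ih =>
    rw [mul_add_one, alternatingWord_succ', alternatingWord_succ']
    simp [ih, pow_succ', mul_assoc]

theorem leftInvSeq_alternatingWord (a b : B) (p : ℕ) :
    lis (alternatingWord a b (2 * p)) = (range (2 * p)).map fun k => s a * (s b * s a) ^ k := by
  refine ext_getElem (by simp) fun k hk _ => ?_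
  rw [getElem_leftInvSeq_alternatingWord cs a b p k (by simpa using hk),
    prod_alternatingWord_eq_mul_pow]
  simp [Nat.add_div_of_dvd_right]

section ReflSignRep

variable [DecidableEq W]

noncomputable def reflSignPerm (i : B) : Equiv.Perm (W × ℤˣ) :=
  Function.Involutive.toPerm (fun p => (s i * p.1 * s i, if p.1 = s i then -p.2 else p.2))
    fun ⟨t, e⟩ => by
      have ht : t * s i = 1 ↔ t = s i := by rw [mul_eq_one_iff_eq_inv, inv_simple]
      by_cases h : t = s i <;> simp [h, ht, mul_assoc, simple_mul_simple_cancel_left]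

theorem reflSignPerm_apply (i : B) (t : W) (e : ℤˣ) :
    cs.reflSignPerm i (t, e) = (s i * t * s i, if t = s i then -e else e) := rfl

theorem prod_map_reflSignPerm_apply (ω : List B) (t : W) (e : ℤˣ) :
    (ω.map cs.reflSignPerm).prod ((π ω)⁻¹ * t * π ω, e) = (t, (-1) ^ (lis ω).count t * e) := by
  induction ω generalizing t with
  | nil => simp
  | cons i ω ih =>
    obtain ⟨u, rfl⟩ := (MulAut.conj (s i)).surjective t
    have hfst : (π (i :: ω))⁻¹ * MulAut.conj (s i) u * π (i :: ω) = (π ω)⁻¹ * u * π ω := by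
      simp [wordProd_cons, mul_assoc, inv_simple, simple_mul_simple_cancel_left]
    rw [map_cons, prod_cons, Equiv.Perm.mul_apply, hfst, ih, reflSignPerm_apply, leftInvSeq,
      count_cons, count_map_of_injective _ _ (MulAut.conj (s i)).injective]
    by_cases h : u = s i
    · subst h
      simp [pow_succ, inv_simple]
    · have h' : s i * u ≠ 1 := by rw [Ne, mul_eq_one_iff_inv_eq, inv_simple]; exact Ne.symm h
      simp [h, h', inv_simple]

theorem even_count_leftInvSeq_alternatingWord_two_mul (a b : B) (t : W) :
    Even ((lis (alternatingWord a b (2 * M a b))).count t) := by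
  have hper : ∀ k, s a * (s b * s a) ^ (M a b + k) = s a * (s b * s a) ^ k := by
    simp [pow_add, simple_mul_simple_pow']
  rw [leftInvSeq_alternatingWord, two_mul, range_add, map_append, map_map]
  simp only [Function.comp_def, hper, count_append]
  exact Even.add_self _

theorem isLiftable_reflSignPerm : M.IsLiftable cs.reflSignPerm := by
  intro a b
  rw [← prod_map_alternatingWord_two_mul]
  ext ⟨t, e⟩ : 1
  have h1 : π (alternatingWord a b (2 * M a b)) = 1 := by
    simp [prod_alternatingWord_eq_mul_pow]
  have h := cs.prod_map_reflSignPerm_apply (alternatingWord a b (2 * M a b)) t e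
  rw [h1, inv_one, one_mul, mul_one,
    (cs.even_count_leftInvSeq_alternatingWord_two_mul a b t).neg_one_pow, one_mul] at h
  simpa using h

noncomputable def reflSignRep : W →* Equiv.Perm (W × ℤˣ) :=
  cs.lift ⟨cs.reflSignPerm, cs.isLiftable_reflSignPerm⟩

theorem reflSignRep_wordProd (ω : List B) :
    cs.reflSignRep (π ω) = (ω.map cs.reflSignPerm).prod := by
  rw [wordProd, map_list_prod, map_map]
  congr 2
  ext1 i
  exact cs.lift_apply_simple cs.isLiftable_reflSignPerm i

theorem neg_one_pow_count_leftInvSeq_eq_of_wordProd_eq {ω ω' : List B} (h : π ω = π ω') (t : W) :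
    (-1 : ℤˣ) ^ (lis ω).count t = (-1) ^ (lis ω').count t := by
  have := congrArg (fun w => (cs.reflSignRep w ((π ω)⁻¹ * t * π ω, 1)).2) h
  simp only [reflSignRep_wordProd] at this
  rwa [prod_map_reflSignPerm_apply, h, prod_map_reflSignPerm_apply, mul_one, mul_one] at this

end ReflSignRep

theorem mem_leftInvSeq_of_isLeftDescent {ω : List B} {j : B}
    (h : cs.IsLeftDescent (π ω) j) : s j ∈ lis ω := by
  classical
  obtain ⟨ω', hred, hω'⟩ := cs.exists_isReduced (s j * π ω)
  have hπ : π (j :: ω') = π ω := by rw [wordProd_cons, ← hω', simple_mul_simple_cancel_left]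
  have hnot : s j ∉ lis ω' := fun hmem => by
    have := (cs.isLeftInversion_of_mem_leftInvSeq hred hmem).2
    rw [← hω', simple_mul_simple_cancel_left] at this
    exact lt_asymm this h
  have hcount : (lis (j :: ω')).count (s j) = 1 := by
    have hconj : MulAut.conj (s j) (s j) = s j := by simp
    rw [leftInvSeq, count_cons_self]
    nth_rw 1 [← hconj]
    rw [count_map_of_injective _ _ (MulEquiv.injective _), count_eq_zero.mpr hnot]
  have hsign := cs.neg_one_pow_count_leftInvSeq_eq_of_wordProd_eq hπ (s j)
  rw [hcount, pow_one] at hsign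
  refine count_pos_iff.mp (Nat.pos_of_ne_zero fun h0 => ?_)
  rw [h0, pow_zero] at hsign
  exact absurd hsign (by decide)

theorem mem_rightInvSeq_of_isRightDescent {ω : List B} {j : B}
    (h : cs.IsRightDescent (π ω) j) : s j ∈ ris ω := by
  have : s j ∈ lis ω.reverse := by
    apply cs.mem_leftInvSeq_of_isLeftDescent
    rwa [wordProd_reverse, isLeftDescent_inv_iff]
  rwa [← reverse_reverse ω, rightInvSeq_reverse, mem_reverse]

theorem exists_wordProd_eraseIdx_of_isRightDescent {ω : List B} {j : B}
    (h : cs.IsRightDescent (π ω) j) : ∃ k < ω.length, π ω * s j = π (ω.eraseIdx k) := by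
  obtain ⟨k, hk, hget⟩ := mem_iff_getElem.mp (cs.mem_rightInvSeq_of_isRightDescent h)
  refine ⟨k, by simpa using hk, ?_⟩
  rw [← wordProd_mul_getD_rightInvSeq, getD_eq_getElem _ _ hk, hget]

theorem isRightDescent_or_length_mul_conj_lt {u v : W} {j : B} (huv : ℓ (u * v) = ℓ u + ℓ v)
    (h : cs.IsRightDescent (u * v) j) :
    cs.IsRightDescent v j ∨ ℓ (u * (v * s j * v⁻¹)) < ℓ u := by
  obtain ⟨ωu, hωu, rfl⟩ := cs.exists_isReduced u
  obtain ⟨ωv, hωv, rfl⟩ := cs.exists_isReduced v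
  rw [← wordProd_append] at h
  obtain ⟨k, hk, hexch⟩ := cs.exists_wordProd_eraseIdx_of_isRightDescent h
  rw [length_append] at hk
  rw [wordProd_append] at hexch
  by_cases hku : k < ωu.length
  · right
    rw [eraseIdx_append_of_lt_length hku, wordProd_append] at hexch
    have : π ωu * (π ωv * s j * (π ωv)⁻¹) = π (ωu.eraseIdx k) := by
      rw [← mul_assoc, ← mul_assoc, hexch, mul_inv_cancel_right]
    rw [this, hωu.eq]
    have := cs.length_wordProd_le (ωu.eraseIdx k)
    rw [length_eraseIdx_of_lt hku] at this
    omega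
  · left
    rw [eraseIdx_append_of_length_le (not_lt.mp hku), wordProd_append, mul_assoc,
      mul_right_inj] at hexch
    rw [IsRightDescent, hexch, hωv.eq]
    have := cs.length_wordProd_le (ωv.eraseIdx (k - ωu.length))
    rw [length_eraseIdx_of_lt (by omega)] at this
    omega

theorem parabolic_mono {X Y : Set B} (h : X ⊆ Y) : cs.parabolic X ≤ cs.parabolic Y :=
  Subgroup.closure_mono (Set.image_mono h)

theorem isMinimalCosetRep_one (X : Set B) : cs.IsMinimalCosetRep X 1 := fun _ _ => by simp

namespace IsMinimalCosetRep

variable {cs}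

theorem length_mul {Y : Set B} {w c : W} (hw : cs.IsMinimalCosetRep Y w)
    (hc : c ∈ cs.parabolic Y) : ℓ (w * c) = ℓ w + ℓ c := by
  have step : ∀ c ∈ cs.parabolic Y, ∀ j ∈ Y, ℓ (w * c) = ℓ w + ℓ c →
      ℓ (w * (c * s j)) = ℓ w + ℓ (c * s j) := by
    intro c hc j hj ih
    rw [← mul_assoc]
    have hcs := cs.length_mul_simple c j
    rcases cs.length_mul_simple (w * c) j with hup | hdown
    · have := cs.length_mul_le w (c * s j)
      rw [← mul_assoc] at this
      omega
    · rcases cs.isRightDescent_or_length_mul_conj_lt ih (j := j) (by rw [IsRightDescent]; omega)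
        with hdesc | hlt
      · rw [IsRightDescent] at hdesc
        omega
      · have hmem : c * s j * c⁻¹ ∈ cs.parabolic Y :=
          mul_mem (mul_mem hc (Subgroup.subset_closure ⟨j, hj, rfl⟩)) (inv_mem hc)
        exact absurd (hw _ hmem) (not_le.mpr hlt)
  induction hc using Subgroup.closure_induction_right with
  | one => simp
  | mul_right c hc _ hj ih =>
    obtain ⟨j, hj, rfl⟩ := hj
    exact step c hc j hj ih
  | mul_inv_cancel c hc _ hj ih =>
    obtain ⟨j, hj, rfl⟩ := hj
    rw [inv_simple]
    exact step c hc j hj ih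

theorem mul {X Y : Set B} {v u : W} (hv : cs.IsMinimalCosetRep Y v) (huY : u ∈ cs.parabolic Y)
    (hu : cs.IsMinimalCosetRep X u) (hXY : X ⊆ Y) : cs.IsMinimalCosetRep X (v * u) := by
  intro x hx
  have hxY := cs.parabolic_mono hXY hx
  rw [hv.length_mul huY, mul_assoc, hv.length_mul (mul_mem huY hxY)]
  exact Nat.add_le_add_left (hu x hx) _

theorem eq_one_of_mem {X : Set B} {w : W} (hw : cs.IsMinimalCosetRep X w)
    (hmem : w ∈ cs.parabolic X) : w = 1 := by
  have := hw _ (inv_mem hmem)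
  rwa [mul_inv_cancel, cs.length_one, Nat.le_zero, cs.length_eq_zero_iff] at this

end IsMinimalCosetRep

end CoxeterSystem

theorem stmt_0_general {B W : Type*} [Group W] {M : CoxeterMatrix B}
    (cs : CoxeterSystem M W) :
    IsPartialOrder {p : W × Set B // ((cs.parabolic p.2 : Set W)).Finite}
      (fun a b => a.1.2 ⊆ b.1.2 ∧ (b.1.1)⁻¹ * a.1.1 ∈ cs.parabolic b.1.2 ∧
        cs.IsMinimalCosetRep a.1.2 ((b.1.1)⁻¹ * a.1.1)) := by
  refine { refl := fun p => ?_, trans := fun p q r => ?_, antisymm := fun p q => ?_ }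
  · exact ⟨subset_rfl, by simp, by simp [cs.isMinimalCosetRep_one]⟩
  · rintro ⟨hXY, hmem, hmin⟩ ⟨hYZ, hmem', hmin'⟩
    have hprod : r.1.1⁻¹ * p.1.1 = (r.1.1⁻¹ * q.1.1) * (q.1.1⁻¹ * p.1.1) := by group
    rw [hprod]
    exact ⟨hXY.trans hYZ, mul_mem hmem' (cs.parabolic_mono hYZ hmem), hmin'.mul hmem hmin hXY⟩
  · rintro ⟨hXY, hmem, hmin⟩ ⟨hYX, -, -⟩
    have hX : p.1.2 = q.1.2 := hXY.antisymm hYX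
    have hpq : q.1.1⁻¹ * p.1.1 = 1 := hmin.eq_one_of_mem (hX ▸ hmem)
    exact Subtype.ext (Prod.ext (inv_mul_eq_one.mp hpq).symm hX)

/-- the relation `⪯` on `W × 𝒮^f` is a partial order. -/
theorem stmt_0 {B W : Type*} [Finite B] [Group W] {M : CoxeterMatrix B}
    (cs : CoxeterSystem M W) :
    IsPartialOrder {p : W × Set B // ((cs.parabolic p.2 : Set W)).Finite}
      (fun a b => a.1.2 ⊆ b.1.2 ∧ (b.1.1)⁻¹ * a.1.1 ∈ cs.parabolic b.1.2 ∧
        cs.IsMinimalCosetRep a.1.2 ((b.1.1)⁻¹ * a.1.1)) :=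
  stmt_0_general cs
end

section
/- Let V = ℝ^ℓ, let I ⊆ V be a nonempty open convex cone, and let H₁,…,H_k be hyperplanes given as kernels of linearly independent linear forms α₁,…,α_k on V. Suppose L = H₁ ∩ ⋯ ∩ H_k meets I. For each i, let H_i^+ = {x ∈ V : α_i(x) > 0}. Then the set (⋃_{i=1}^k H_i^+) ∩ I is contractible; in fact it deformation retracts to a point q₀ via straight-line homotopy h_t(p) = (1−t)p + t q₀ for a suitably chosen q₀ in the set. -/
/-!
Pick `p ∈ L ∩ I`. Since the `αᵢ` are independent there is `v` with `αᵢ v = 1` for all `i`, and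
as `I` is open, `q₀ = p + t v ∈ I` for some `t > 0`; then `αᵢ q₀ = t > 0` for every `i`. Each open
half-space `Hᵢ⁺` is convex and contains `q₀`, so their union is star-shaped around `q₀`, and so is
its intersection with the convex set `I`. A star-shaped set is contractible.
-/

open Set Filter Topology

theorem LinearIndependent.surjective_pi {ι F E : Type*} [Finite ι] [Field F] [AddCommGroup E]
    [Module F E] {α : ι → E →ₗ[F] F} (hα : LinearIndependent F α) :
    Function.Surjective (LinearMap.pi α) := by
  have hα' : LinearIndependent F fun i ↦ ⇑(α i) :=
    hα.map' (LinearMap.ltoFun F E F F) (LinearMap.ker_eq_bot.mpr DFunLike.coe_injective)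
  rw [← LinearMap.range_eq_top, ← Submodule.span_eq (LinearMap.range _), LinearMap.coe_range]
  exact span_flip_eq_top_iff_linearIndependent.mpr hα'

theorem IsOpen.exists_pos_add_smul_mem {E : Type*} [AddCommGroup E] [Module ℝ E]
    [TopologicalSpace E] [ContinuousAdd E] [ContinuousSMul ℝ E] {I : Set E} (hI : IsOpen I)
    {p : E} (hp : p ∈ I) (v : E) : ∃ t : ℝ, 0 < t ∧ p + t • v ∈ I := by
  have hnear : ∀ᶠ t in 𝓝 (0 : ℝ), p + t • v ∈ I :=
    (continuous_const.add (continuous_id.smul continuous_const)).continuousAt.preimage_mem_nhds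
      (by simpa using hI.mem_nhds hp)
  have hpos : ∀ᶠ t in 𝓝[>] (0 : ℝ), 0 < t := self_mem_nhdsWithin
  exact (hpos.and (hnear.filter_mono nhdsWithin_le_nhds)).exists

theorem exists_mem_forall_pos_of_isOpen {ι E : Type*} [Finite ι] [AddCommGroup E] [Module ℝ E]
    [TopologicalSpace E] [ContinuousAdd E] [ContinuousSMul ℝ E] {α : ι → E →ₗ[ℝ] ℝ}
    (hα : LinearIndependent ℝ α) {I : Set E} (hI : IsOpen I) {p : E} (hp : p ∈ I)
    (hpα : ∀ i, α i p = 0) : ∃ q ∈ I, ∀ i, 0 < α i q := by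
  obtain ⟨v, hv⟩ := hα.surjective_pi fun _ ↦ 1
  obtain ⟨t, ht, htI⟩ := hI.exists_pos_add_smul_mem hp v
  refine ⟨p + t • v, htI, fun i ↦ ?_⟩
  have hvi : α i v = 1 := congrFun hv i
  simpa [hpα i, hvi] using ht

theorem starConvex_iUnion_halfSpace_inter {ι 𝕜 E : Type*} [Field 𝕜] [LinearOrder 𝕜]
    [IsStrictOrderedRing 𝕜] [AddCommGroup E] [Module 𝕜 E] (α : ι → E →ₗ[𝕜] 𝕜) {I : Set E}
    (hI : Convex 𝕜 I) {q : E} (hqI : q ∈ I) (hq : ∀ i, 0 < α i q) :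
    StarConvex 𝕜 q ((⋃ i, {x | 0 < α i x}) ∩ I) :=
  (starConvex_iUnion fun i ↦ (convex_halfSpace_gt (α i).isLinear 0).starConvex (hq i)).inter
    (hI.starConvex hqI)

theorem stmt_6_general (l k : ℕ) (hk : 0 < k) (I : Set (Fin l → ℝ))
    (hop : IsOpen I) (hconv : Convex ℝ I)
    (α : Fin k → ((Fin l → ℝ) →ₗ[ℝ] ℝ))
    (hind : LinearIndependent ℝ α)
    (hL : ((⋂ i, {x | α i x = 0}) ∩ I).Nonempty) :
    (∃ q₀ ∈ (⋃ i, {x | 0 < α i x}) ∩ I,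
        StarConvex ℝ q₀ ((⋃ i, {x | 0 < α i x}) ∩ I)) ∧
      ContractibleSpace ((⋃ i, {x | 0 < α i x}) ∩ I : Set (Fin l → ℝ)) := by
  obtain ⟨p, hpL, hpI⟩ := hL
  obtain ⟨q₀, hq₀I, hq₀⟩ := exists_mem_forall_pos_of_isOpen hind hop hpI
    fun i ↦ mem_iInter.mp hpL i
  have hq₀_mem : q₀ ∈ (⋃ i, {x | 0 < α i x}) ∩ I := ⟨mem_iUnion.mpr ⟨⟨0, hk⟩, hq₀ _⟩, hq₀I⟩
  have hstar := starConvex_iUnion_halfSpace_inter α hconv hq₀I hq₀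
  exact ⟨⟨q₀, hq₀_mem, hstar⟩, hstar.contractibleSpace ⟨q₀, hq₀_mem⟩⟩

/-- if `I ⊆ ℝ^ℓ` is a nonempty open convex cone and `H₁,…,H_k` are
independent hyperplanes (kernels of linearly independent linear forms `αᵢ`) whose
intersection `L` meets `I`, then `(⋃ᵢ Hᵢ⁺) ∩ I` is star-shaped around a suitable point
`q₀` (so the straight-line homotopy to `q₀` stays in the set) and is contractible. -/
theorem stmt_6 (l k : ℕ) (hk : 0 < k) (I : Set (Fin l → ℝ))
    (hne : I.Nonempty) (hop : IsOpen I) (hconv : Convex ℝ I)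
    (hcone : ∀ x ∈ I, ∀ c : ℝ, 0 < c → c • x ∈ I)
    (α : Fin k → ((Fin l → ℝ) →ₗ[ℝ] ℝ))
    (hind : LinearIndependent ℝ α)
    (hL : ((⋂ i, {x | α i x = 0}) ∩ I).Nonempty) :
    (∃ q₀ ∈ (⋃ i, {x | 0 < α i x}) ∩ I,
        StarConvex ℝ q₀ ((⋃ i, {x | 0 < α i x}) ∩ I)) ∧
      ContractibleSpace ((⋃ i, {x | 0 < α i x}) ∩ I : Set (Fin l → ℝ)) :=
  stmt_6_general l k hk I hop hconv α hind hL
end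

section
/- Let (W,S) be a Coxeter system. Fix s ∈ S. For X ⊆ S with W_X finite and u the (∅,X)-minimal element of a coset uW_X, say the coset uW_X is s-minimal if ℓ(su) = ℓ(u) + 1 and su is (∅,X)-minimal. Then: uW_X is s-minimal if and only if ℓ(suw) = ℓ(u) + ℓ(w) + 1 for all w ∈ W_X. Consequently, if uW_X is s-minimal and vW_Y ⊆ uW_X (with Y ⊆ S, W_Y finite), then vW_Y is s-minimal. -/
/-- The coset `u W_X` (with `u` its `(∅,X)`-minimal representative) is `s`-minimal. -/
def CoxeterSystem.IsSMinimal {B W : Type*} [Group W] {M : CoxeterMatrix B}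
    (cs : CoxeterSystem M W) (s : B) (X : Set B) (u : W) : Prop :=
  cs.length (cs.simple s * u) = cs.length u + 1 ∧
    cs.IsMinimalCosetRep X (cs.simple s * u)

/-!
The heart of the matter is that the minimal representative `u` of a coset `u W_X` satisfies
`ℓ(u w) = ℓ(u) + ℓ(w)` for all `w ∈ W_X`. Build `w` one generator `s_x` (`x ∈ X`) at a
time: if `ℓ(w s_x) > ℓ(w)` but `ℓ(u w s_x) < ℓ(u w)`, the exchange condition puts `s_x` in
the right inversion sequence of a reduced word of `u` followed by one of `w`, so either `s_x`
is a right inversion of `w`, or `w s_x w⁻¹ ∈ W_X` is a right inversion of `u`; both are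
impossible. The exchange condition comes from Tits' sign representation of `W` on
`W × {±1}`, where `s_i` acts by `(t, ε) ↦ (s_i t s_i, ±ε)`, the sign flipping exactly when
`t = s_i`.

Applied to the minimal representative `s u` of `s u W_X`, additivity gives both the
characterisation of `s`-minimality and its inheritance by cosets `v W_Y ⊆ u W_X`.
-/

namespace CoxeterSystem

open List

open Classical in
noncomputable def reflSign {W : Type*} (r t : W) : ℤˣ := if t = r then -1 else 1

@[simp] lemma reflSign_self {W : Type*} (r : W) : reflSign r r = -1 := if_pos rfl

variable {B W : Type*} [Group W] {M : CoxeterMatrix B} (cs : CoxeterSystem M W)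

lemma reflSign_conj (g r t : W) : reflSign r (g * t * g⁻¹) = reflSign (g⁻¹ * r * g) t := by
  have : g * t * g⁻¹ = r ↔ t = g⁻¹ * r * g := by
    constructor <;> rintro rfl <;> group
  classical exact if_congr this rfl rfl

lemma reflSign_simple_conj (i : B) (t : W) :
    reflSign (cs.simple i) (cs.simple i * t * cs.simple i) = reflSign (cs.simple i) t := by
  simpa [mul_assoc] using reflSign_conj (cs.simple i) (cs.simple i) t

lemma simple_mul_pow_simple_mul_simple (i j : B) (k : ℕ) :
    cs.simple j * (cs.simple i * cs.simple j) ^ k =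
      ((cs.simple i * cs.simple j) ^ k)⁻¹ * cs.simple j := by
  have h : SemiconjBy (cs.simple j) (cs.simple i * cs.simple j)
      (cs.simple i * cs.simple j)⁻¹ := by
    simp [SemiconjBy, mul_assoc]
  rw [(h.pow_right k).eq, inv_pow]

noncomputable def signPerm (i : B) : Equiv.Perm (W × ℤˣ) :=
  Function.Involutive.toPerm
    (fun p ↦ (cs.simple i * p.1 * cs.simple i, reflSign (cs.simple i) p.1 * p.2)) fun p ↦ by
      simp [reflSign_simple_conj, ← mul_assoc, Int.units_mul_self]

lemma signPerm_apply (i : B) (t : W) (ε : ℤˣ) :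
    cs.signPerm i (t, ε) = (cs.simple i * t * cs.simple i, reflSign (cs.simple i) t * ε) := rfl

lemma signPerm_mul_signPerm_pow_apply (i j : B) (k : ℕ) (t : W) (ε : ℤˣ) :
    ((cs.signPerm i * cs.signPerm j) ^ k) (t, ε) =
      ((cs.simple i * cs.simple j) ^ k * t * ((cs.simple i * cs.simple j) ^ k)⁻¹,
        (∏ d ∈ Finset.range (2 * k),
          reflSign (cs.simple j * (cs.simple i * cs.simple j) ^ d) t) * ε) := by
  induction k with
  | zero => simp
  | succ k ih =>
    set a := cs.simple i * cs.simple j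
    have hconj : cs.simple j * (a ^ k * t * (a ^ k)⁻¹) * cs.simple j =
        (cs.simple j * a ^ k) * t * (cs.simple j * a ^ k)⁻¹ := by
      simp [mul_assoc]
    have hj : (a ^ k)⁻¹ * cs.simple j * a ^ k = cs.simple j * a ^ (2 * k) := by
      rw [← cs.simple_mul_pow_simple_mul_simple, mul_assoc, ← pow_add, two_mul]
    have hi : (cs.simple j * a ^ k)⁻¹ * cs.simple i * (cs.simple j * a ^ k) =
        cs.simple j * a ^ (2 * k + 1) := by
      calc (cs.simple j * a ^ k)⁻¹ * cs.simple i * (cs.simple j * a ^ k)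
          = (a ^ k)⁻¹ * cs.simple j * (a * a ^ k) := by
            simp only [a, mul_inv_rev, inv_simple, mul_assoc]
        _ = (a ^ k)⁻¹ * cs.simple j * a ^ k * a := by rw [← pow_succ', pow_succ]; group
        _ = cs.simple j * a ^ (2 * k + 1) := by rw [hj, mul_assoc, ← pow_succ]
    rw [pow_succ', Equiv.Perm.mul_apply, Equiv.Perm.mul_apply, ih, signPerm_apply, signPerm_apply,
      hconj, reflSign_conj, reflSign_conj, hi, hj, Nat.mul_succ, Finset.prod_range_succ,
      Finset.prod_range_succ]
    refine Prod.ext ?_ ?_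
    · simp only [a, pow_succ', mul_inv_rev, inv_simple]
      group
    · simp only [mul_comm, mul_left_comm]

lemma isLiftable_signPerm : M.IsLiftable cs.signPerm := by
  intro i j
  ext1 ⟨t, ε⟩
  have hperiod (d : ℕ) :
      (cs.simple i * cs.simple j) ^ (M i j + d) = (cs.simple i * cs.simple j) ^ d := by
    rw [pow_add, cs.simple_mul_simple_pow, one_mul]
  rw [signPerm_mul_signPerm_pow_apply, Equiv.Perm.one_apply, cs.simple_mul_simple_pow, two_mul,
    Finset.prod_range_add]
  simp [hperiod, ← Finset.prod_mul_distrib, Int.units_mul_self]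

noncomputable def signRep : W →* Equiv.Perm (W × ℤˣ) :=
  cs.lift ⟨cs.signPerm, cs.isLiftable_signPerm⟩

lemma signRep_wordProd_apply (ω : List B) (t : W) (ε : ℤˣ) :
    cs.signRep (cs.wordProd ω) (t, ε) =
      (cs.wordProd ω * t * (cs.wordProd ω)⁻¹,
        ((cs.rightInvSeq ω).map (reflSign · t)).prod * ε) := by
  induction ω with
  | nil => simp
  | cons i ω ih =>
    rw [wordProd_cons, map_mul, Equiv.Perm.mul_apply, ih, signRep, lift_apply_simple,
      signPerm_apply, rightInvSeq, map_cons, prod_cons, reflSign_conj]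
    refine Prod.ext ?_ ?_
    · simp only [mul_inv_rev, inv_simple, mul_assoc]
    · simp only [mul_comm, mul_left_comm, mul_assoc]

lemma prod_map_reflSign_rightInvSeq_eq_of_wordProd_eq {ω ω' : List B}
    (h : cs.wordProd ω = cs.wordProd ω') (t : W) :
    ((cs.rightInvSeq ω).map (reflSign · t)).prod =
      ((cs.rightInvSeq ω').map (reflSign · t)).prod := by
  simpa [signRep_wordProd_apply] using congrArg (fun w ↦ (cs.signRep w (t, 1)).2) h

lemma prod_map_reflSign_rightInvSeq_concat (ω : List B) (i : B) :
    ((cs.rightInvSeq (ω.concat i)).map (reflSign · (cs.simple i))).prod =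
      -((cs.rightInvSeq ω).map (reflSign · (cs.simple i))).prod := by
  have hconj (r : W) :
      reflSign (cs.simple i * r * cs.simple i) (cs.simple i) = reflSign r (cs.simple i) := by
    simpa [mul_assoc] using (reflSign_conj (cs.simple i) r (cs.simple i)).symm
  rw [rightInvSeq_concat]
  simp [hconj, Function.comp_def]

lemma prod_map_reflSign_rightInvSeq_of_notMem {ω : List B} {t : W}
    (ht : t ∉ cs.rightInvSeq ω) :
    ((cs.rightInvSeq ω).map (reflSign · t)).prod = 1 :=
  prod_eq_one fun _ hmem ↦ by
    obtain ⟨r, hr, rfl⟩ := mem_map.mp hmem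
    exact if_neg (by rintro rfl; exact ht hr)

/-- The sign of `s i` along a word depends only on the word's product `w` and flips when `i` is
appended; so if `s i` is missing from the right inversion sequence of `ω`, it occurs in that of a
reduced word for `w * s i`, and `s i` would be a right descent of both `w` and `w * s i`. -/
theorem simple_mem_rightInvSeq_of_isRightDescent {ω : List B} {i : B}
    (h : cs.IsRightDescent (cs.wordProd ω) i) : cs.simple i ∈ cs.rightInvSeq ω := by
  by_contra hnot
  obtain ⟨ω', hω', hω'prod⟩ := cs.exists_isReduced (cs.wordProd ω * cs.simple i)
  have hmem : cs.simple i ∈ cs.rightInvSeq ω' := by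
    by_contra hnot'
    have := cs.prod_map_reflSign_rightInvSeq_eq_of_wordProd_eq (ω := ω.concat i) (ω' := ω')
      (by rw [wordProd_concat, hω'prod]) (cs.simple i)
    rw [prod_map_reflSign_rightInvSeq_concat, prod_map_reflSign_rightInvSeq_of_notMem _ hnot,
      prod_map_reflSign_rightInvSeq_of_notMem _ hnot'] at this
    exact absurd this (by decide)
  have := (cs.isRightInversion_of_mem_rightInvSeq hω' hmem).2
  rw [← hω'prod, simple_mul_simple_cancel_right] at this
  exact h.not_gt this

theorem rightInvSeq_append (ω ω' : List B) :
    cs.rightInvSeq (ω ++ ω') =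
      (cs.rightInvSeq ω).map (MulAut.conj (cs.wordProd ω')⁻¹) ++ cs.rightInvSeq ω' := by
  induction ω with
  | nil => simp
  | cons i ω ih =>
    simp only [cons_append, rightInvSeq, ih, wordProd_append, map_cons, MulAut.conj_apply]
    group

namespace IsMinimalCosetRep

variable {cs} {X : Set B} {u w : W} {x : B}

theorem not_isRightDescent_mul (hu : cs.IsMinimalCosetRep X u) (hw : w ∈ cs.parabolic X)
    (hx : x ∈ X) (hwx : ¬cs.IsRightDescent w x) : ¬cs.IsRightDescent (u * w) x := by
  intro hdesc
  obtain ⟨κ, hκ, rfl⟩ := cs.exists_isReduced u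
  obtain ⟨τ, hτ, rfl⟩ := cs.exists_isReduced w
  rw [← wordProd_append] at hdesc
  have hmem := cs.simple_mem_rightInvSeq_of_isRightDescent hdesc
  rw [rightInvSeq_append, mem_append, mem_map] at hmem
  rcases hmem with ⟨r, hr, hrx⟩ | hmem
  · have hr_eq : r = cs.wordProd τ * cs.simple x * (cs.wordProd τ)⁻¹ := by
      rw [← hrx]; simp [mul_assoc]
    have hrX : r ∈ cs.parabolic X := by
      have hxX : cs.simple x ∈ cs.parabolic X := Subgroup.subset_closure ⟨x, hx, rfl⟩
      rw [hr_eq]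
      exact mul_mem (mul_mem hw hxX) (inv_mem hw)
    exact (hu r hrX).not_gt (cs.isRightInversion_of_mem_rightInvSeq hκ hr).2
  · exact hwx (cs.isRightInversion_of_mem_rightInvSeq hτ hmem).2

theorem length_mul_mul_simple (hu : cs.IsMinimalCosetRep X u) (hw : w ∈ cs.parabolic X)
    (hx : x ∈ X) (huw : cs.length (u * w) = cs.length u + cs.length w) :
    cs.length (u * (w * cs.simple x)) = cs.length u + cs.length (w * cs.simple x) := by
  by_cases hwx : cs.IsRightDescent w x
  · have hle := cs.length_mul_le u (w * cs.simple x)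
    have hge := cs.length_le_length_mul_add_right (u * w) (cs.simple x)
    rw [length_simple, mul_assoc] at hge
    rw [isRightDescent_iff] at hwx
    omega
  · rw [← mul_assoc, cs.not_isRightDescent_iff.mp (hu.not_isRightDescent_mul hw hx hwx), huw,
      cs.not_isRightDescent_iff.mp hwx, add_assoc]

theorem length_mul_s7 (hu : cs.IsMinimalCosetRep X u) (hw : w ∈ cs.parabolic X) :
    cs.length (u * w) = cs.length u + cs.length w := by
  induction hw using Subgroup.closure_induction_right with
  | one => simp
  | mul_right w hw _ hx ih =>
    obtain ⟨x, hx, rfl⟩ := hx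
    exact hu.length_mul_mul_simple hw hx ih
  | mul_inv_cancel w hw _ hx ih =>
    obtain ⟨x, hx, rfl⟩ := hx
    rw [inv_simple]
    exact hu.length_mul_mul_simple hw hx ih

end IsMinimalCosetRep

namespace IsSMinimal

variable {cs} {i : B} {X Y : Set B} {u v w : W}

theorem length_simple_mul_mul (h : cs.IsSMinimal i X u) (hw : w ∈ cs.parabolic X) :
    cs.length (cs.simple i * (u * w)) = cs.length u + cs.length w + 1 := by
  rw [← mul_assoc, h.2.length_mul_s7 hw, h.1, add_right_comm]

theorem not_isLeftDescent_mul (h : cs.IsSMinimal i X u) (hw : w ∈ cs.parabolic X) :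
    ¬cs.IsLeftDescent (u * w) i := by
  have hsuw := h.length_simple_mul_mul hw
  have huw_le := cs.length_mul_le u w
  have hsuw_le := cs.length_mul_le (cs.simple i) (u * w)
  rw [length_simple] at hsuw_le
  rw [cs.not_isLeftDescent_iff]
  omega

theorem of_image_subset (h : cs.IsSMinimal i X u) (hv : cs.IsMinimalCosetRep Y v)
    (hsub : (v * ·) '' (cs.parabolic Y : Set W) ⊆ (u * ·) '' (cs.parabolic X : Set W)) :
    cs.IsSMinimal i Y v := by
  have hcoset {q : W} (hq : q ∈ cs.parabolic Y) :
      cs.length (cs.simple i * (v * q)) = cs.length (v * q) + 1 := by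
    obtain ⟨p, hp, hpq⟩ := hsub ⟨q, hq, rfl⟩
    rw [show v * q = u * p from hpq.symm, ← cs.not_isLeftDescent_iff]
    exact h.not_isLeftDescent_mul hp
  have hsv : cs.length (cs.simple i * v) = cs.length v + 1 := by
    simpa using hcoset (one_mem _)
  refine ⟨hsv, fun q hq ↦ ?_⟩
  rw [mul_assoc, hcoset hq, hsv]
  exact Nat.add_le_add_right (hv q hq) 1

end IsSMinimal

theorem isSMinimal_iff {i : B} {X : Set B} {u : W} :
    cs.IsSMinimal i X u ↔ ∀ w ∈ cs.parabolic X,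
      cs.length (cs.simple i * (u * w)) = cs.length u + cs.length w + 1 := by
  refine ⟨fun h _ hw ↦ h.length_simple_mul_mul hw, fun h ↦ ?_⟩
  have hsu : cs.length (cs.simple i * u) = cs.length u + 1 := by
    simpa using h 1 (one_mem _)
  refine ⟨hsu, fun w hw ↦ ?_⟩
  rw [mul_assoc, h w hw, hsu]
  omega

end CoxeterSystem

theorem stmt_7_general {B W : Type*} [Group W] {M : CoxeterMatrix B}
    (cs : CoxeterSystem M W) (s : B) (X Y : Set B)
    (u v : W) (hv : cs.IsMinimalCosetRep Y v) :
    (cs.IsSMinimal s X u ↔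
      ∀ w ∈ cs.parabolic X,
        cs.length (cs.simple s * (u * w)) = cs.length u + cs.length w + 1) ∧
    (cs.IsSMinimal s X u →
      (v * ·) '' (cs.parabolic Y : Set W) ⊆ (u * ·) '' (cs.parabolic X : Set W) →
      cs.IsSMinimal s Y v) :=
  ⟨cs.isSMinimal_iff, fun h hsub ↦ h.of_image_subset hv hsub⟩

/-- `uW_X` is `s`-minimal iff `ℓ(suw) = ℓ(u) + ℓ(w) + 1` for all `w ∈ W_X`;
consequently if `uW_X` is `s`-minimal and `vW_Y ⊆ uW_X` then `vW_Y` is `s`-minimal. -/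
theorem stmt_7 {B W : Type*} [Group W] {M : CoxeterMatrix B}
    (cs : CoxeterSystem M W) (s : B) (X Y : Set B)
    (hX : ((cs.parabolic X : Set W)).Finite) (hY : ((cs.parabolic Y : Set W)).Finite)
    (u v : W) (hu : cs.IsMinimalCosetRep X u) (hv : cs.IsMinimalCosetRep Y v) :
    (cs.IsSMinimal s X u ↔
      ∀ w ∈ cs.parabolic X,
        cs.length (cs.simple s * (u * w)) = cs.length u + cs.length w + 1) ∧
    (cs.IsSMinimal s X u →
      (v * ·) '' (cs.parabolic Y : Set W) ⊆ (u * ·) '' (cs.parabolic X : Set W) →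
      cs.IsSMinimal s Y v) :=
  stmt_7_general cs s X Y u v hv
end

section
/- Let (W,S) be a Coxeter system, T ⊆ S, and let 𝒮^f = {X ⊆ S : W_X finite}, 𝒮^f_T = {X ∈ 𝒮^f : X ⊆ T}. Define π_T : W × 𝒮^f → W_T × 𝒮^f_T as follows: write u = u₀u₁ with u₀ ∈ W_T and u₁ (T,∅)-minimal, and set π_T(u,X) = (u₀, X₀) where X₀ = {t ∈ T : t ∈ u₁ W_X u₁⁻¹}. Then: (a) X₀ ∈ 𝒮^f_T; (b) π_T restricts to the identity on W_T × 𝒮^f_T; (c) π_T is equivariant under left multiplication by W_T; (d) π_T is order-preserving for the partial order ⪯ on W × 𝒮^f given by (u,X) ⪯ (v,Y) iff X ⊆ Y, v⁻¹u ∈ W_Y, and v⁻¹u is (∅,X)-minimal. -/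
/-- The relation `⪯` on `W × (subsets of S)`:
`(u,X) ⪯ (v,Y)` iff `X ⊆ Y`, `v⁻¹u ∈ W_Y`, and `v⁻¹u` is `(∅,X)`-minimal. -/
def CoxeterSystem.salRel {B W : Type*} [Group W] {M : CoxeterMatrix B}
    (cs : CoxeterSystem M W) (p q : W × Set B) : Prop :=
  p.2 ⊆ q.2 ∧ (q.1)⁻¹ * p.1 ∈ cs.parabolic q.2 ∧
    cs.IsMinimalCosetRep p.2 ((q.1)⁻¹ * p.1)

/-- The `(T,∅)`-minimal element `u₁` of the coset `W_T u`: an element of minimal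
length in `W_T u` (it is in fact unique). -/
noncomputable def CoxeterSystem.leftMinRep {B W : Type*} [Group W] {M : CoxeterMatrix B}
    (cs : CoxeterSystem M W) (T : Set B) (u : W) : W :=
  Function.argminOn cs.length
    {w : W | ∃ a ∈ cs.parabolic T, w = a * u}
    ⟨u, 1, Subgroup.one_mem _, (one_mul u).symm⟩

/-- The retraction `π_T : W × 𝒮^f → W_T × 𝒮^f_T`: writing `u = u₀ u₁` with `u₀ ∈ W_T`
and `u₁` `(T,∅)`-minimal, `π_T(u,X) = (u₀, X₀)` with
`X₀ = {t ∈ T : t ∈ u₁ W_X u₁⁻¹}`. -/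
noncomputable def CoxeterSystem.piT {B W : Type*} [Group W] {M : CoxeterMatrix B}
    (cs : CoxeterSystem M W) (T : Set B) (p : W × Set B) : W × Set B :=
  (p.1 * (cs.leftMinRep T p.1)⁻¹,
    {t ∈ T | (cs.leftMinRep T p.1)⁻¹ * cs.simple t * cs.leftMinRep T p.1 ∈
      cs.parabolic p.2})

open List

namespace CoxStmt
open CoxeterSystem
variable {B W : Type*} [Group W] {M : CoxeterMatrix B} (cs : CoxeterSystem M W)

local prefix:100 "σ" => cs.simple
local prefix:100 "π" => cs.wordProd
local prefix:100 "ℓ" => cs.length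

open Classical

lemma zmod2_add_self : ∀ x y : ZMod 2, x + y + y = x := by decide
lemma zmod2_cases : ∀ x : ZMod 2, x = 0 ∨ x = 1 := by decide
lemma zmod2_neg : ∀ x : ZMod 2, -x = x := by decide

lemma conj_conj (i : B) (w : W) : σ i * (σ i * w * σ i) * σ i = w := by
  have h := cs.simple_mul_simple_self i
  calc σ i * (σ i * w * σ i) * σ i = (σ i * σ i) * w * (σ i * σ i) := by group
    _ = w := by rw [h]; simp

lemma simple_conj_eq_simple_iff (i j : B) (w : W) :
    (σ i * w * σ i = σ j) ↔ (w = σ i * σ j * σ i) := by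
  constructor
  · intro h
    have := congrArg (fun x => σ i * x * σ i) h
    rw [conj_conj] at this
    exact this
  · intro h
    rw [h, conj_conj]

open Classical in
noncomputable def etaFun (i : B) : W × ZMod 2 → W × ZMod 2 :=
  fun p => (σ i * p.1 * σ i, p.2 + if p.1 = σ i then 1 else 0)

lemma etaFun_involutive (i : B) : Function.Involutive (etaFun cs i) := by
  intro p
  unfold etaFun
  apply Prod.ext
  · exact conj_conj cs i p.1
  · show p.2 + _ + _ = p.2
    have h2 : (σ i * p.1 * σ i = σ i) ↔ (p.1 = σ i) := by
      rw [simple_conj_eq_simple_iff]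
      have h3 : σ i * σ i * σ i = σ i := by rw [cs.simple_mul_simple_self, one_mul]
      rw [h3]
    by_cases hc : p.1 = σ i
    · rw [if_pos hc, if_pos (h2.mpr hc)]
      exact zmod2_add_self _ _
    · rw [if_neg hc, if_neg (fun h => hc (h2.mp h))]
      simp

noncomputable def eta (i : B) : Equiv.Perm (W × ZMod 2) :=
  (etaFun_involutive cs i).toPerm

open Classical in
lemma eta_apply (i : B) (p : W × ZMod 2) :
    eta cs i p = (σ i * p.1 * σ i, p.2 + if p.1 = σ i then 1 else 0) := rfl

open Classical in
lemma eta_pow_apply (a b : B) (k : ℕ) (p : W × ZMod 2) :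
    ((eta cs a * eta cs b) ^ k) p =
      ((σ a * σ b) ^ k * p.1 * (σ b * σ a) ^ k,
        p.2 + ∑ n ∈ Finset.range (2 * k), if p.1 = (σ b * σ a) ^ n * σ b then 1 else 0) := by
  have hgh : (σ a * σ b) * (σ b * σ a) = 1 := by
    rw [mul_assoc (σ a), ← mul_assoc (σ b), cs.simple_mul_simple_self]
    simp [cs.simple_mul_simple_self]
  have hsbh : σ b * (σ b * σ a) = σ a := cs.simple_mul_simple_cancel_left b
  have hhsa : (σ b * σ a) * σ a = σ b := cs.simple_mul_simple_cancel_right a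
  induction k generalizing p with
  | zero => simp
  | succ k ih =>
    have step : (eta cs a * eta cs b) p =
        ((σ a * σ b) * p.1 * (σ b * σ a),
          p.2 + ((if p.1 = (σ b * σ a) ^ 0 * σ b then 1 else 0)
            + if p.1 = (σ b * σ a) ^ 1 * σ b then (1 : ZMod 2) else 0)) := by
      show eta cs a (eta cs b p) = _
      rw [eta_apply, eta_apply]
      apply Prod.ext
      · show σ a * (σ b * p.1 * σ b) * σ a = _
        group
      · show _ + _ + _ = _
        have key : (σ b * p.1 * σ b = σ a) ↔ (p.1 = (σ b * σ a) ^ 1 * σ b) := by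
          rw [pow_one, simple_conj_eq_simple_iff, mul_assoc]
        simp only [pow_zero, one_mul, key]
        ring
    have hps : ((eta cs a * eta cs b) ^ (k+1)) p
        = ((eta cs a * eta cs b) ^ k) ((eta cs a * eta cs b) p) := by
      rw [pow_succ]
      rfl
    rw [hps, step, ih]
    apply Prod.ext
    · show (σ a * σ b) ^ k * ((σ a * σ b) * p.1 * (σ b * σ a)) * (σ b * σ a) ^ k
        = (σ a * σ b) ^ (k+1) * p.1 * (σ b * σ a) ^ (k+1)
      rw [pow_succ, pow_succ']
      simp only [mul_assoc]
    · show _ + _ + _ = _ + _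
      have reindex : ∀ n : ℕ, ((σ a * σ b) * p.1 * (σ b * σ a) = (σ b * σ a) ^ n * σ b)
          ↔ (p.1 = (σ b * σ a) ^ (n + 2) * σ b) := by
        intro n
        constructor
        · intro h
          have hp : p.1 = (σ a * σ b)⁻¹ * ((σ b * σ a) ^ n * σ b) * (σ b * σ a)⁻¹ := by
            rw [← h]; group
          have hinv : (σ a * σ b)⁻¹ = σ b * σ a := by
            rw [mul_inv_rev, cs.inv_simple, cs.inv_simple]
          have hinv2 : (σ b * σ a)⁻¹ = σ a * σ b := by
            rw [mul_inv_rev, cs.inv_simple, cs.inv_simple]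
          rw [hinv, hinv2] at hp
          rw [hp]
          calc (σ b * σ a) * ((σ b * σ a) ^ n * σ b) * (σ a * σ b)
              = (σ b * σ a) ^ (n+1) * (σ b * (σ a * σ b)) := by
                rw [pow_succ']; simp only [mul_assoc]
            _ = (σ b * σ a) ^ (n+1) * ((σ b * σ a) * σ b) := by rw [mul_assoc]
            _ = (σ b * σ a) ^ (n+2) * σ b := by
                rw [show n + 2 = (n+1)+1 from rfl, pow_succ (n := n+1)]
                simp only [mul_assoc]
        · intro h
          rw [h]
          calc (σ a * σ b) * ((σ b * σ a) ^ (n+2) * σ b) * (σ b * σ a)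
              = ((σ a * σ b) * (σ b * σ a)) * ((σ b * σ a) ^ (n+1) * (σ b * (σ b * σ a))) := by
                rw [show n + 2 = (n+1)+1 from rfl, pow_succ' (n := n+1)]
                simp only [mul_assoc]
            _ = (σ b * σ a) ^ (n+1) * σ a := by rw [hgh, hsbh, one_mul]
            _ = (σ b * σ a) ^ n * ((σ b * σ a) * σ a) := by rw [pow_succ]; simp only [mul_assoc]
            _ = (σ b * σ a) ^ n * σ b := by rw [hhsa]
      have hsum : ∑ n ∈ Finset.range (2 * k),
            (if (σ a * σ b) * p.1 * (σ b * σ a) = (σ b * σ a) ^ n * σ b then (1 : ZMod 2) else 0)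
          = ∑ n ∈ Finset.range (2 * k), (if p.1 = (σ b * σ a) ^ (n+2) * σ b then (1 : ZMod 2) else 0) := by
        apply Finset.sum_congr rfl
        intro n _
        exact if_congr (reindex n) rfl rfl
      have hsplit : ∑ n ∈ Finset.range (2 * (k+1)), (if p.1 = (σ b * σ a) ^ n * σ b then (1 : ZMod 2) else 0)
          = ((∑ n ∈ Finset.range (2 * k), (if p.1 = (σ b * σ a) ^ (n+2) * σ b then (1 : ZMod 2) else 0))
              + (if p.1 = (σ b * σ a) ^ 1 * σ b then (1 : ZMod 2) else 0))
              + (if p.1 = (σ b * σ a) ^ 0 * σ b then (1 : ZMod 2) else 0) := by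
        have h2 : 2 * (k+1) = (2 * k + 1) + 1 := by ring
        rw [h2, Finset.sum_range_succ', Finset.sum_range_succ']
      rw [hsum, hsplit]
      ring

open Classical in
lemma eta_liftable : M.IsLiftable (eta cs) := by
  intro a b
  ext p : 1
  rw [Equiv.Perm.one_apply, eta_pow_apply]
  have h1 : (σ a * σ b) ^ M.M a b = 1 := cs.simple_mul_simple_pow a b
  have h2 : (σ b * σ a) ^ M.M a b = 1 := cs.simple_mul_simple_pow' a b
  apply Prod.ext
  · show _ = p.1
    rw [h1, h2, one_mul, mul_one]
  · show p.2 + _ = p.2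
    have h3 : (2 : ℕ) * M.M a b = M.M a b + M.M a b := by ring
    rw [h3, Finset.sum_range_add]
    have h4 : ∀ n : ℕ, (if p.1 = (σ b * σ a) ^ (M.M a b + n) * σ b then (1 : ZMod 2) else 0)
        = (if p.1 = (σ b * σ a) ^ n * σ b then (1 : ZMod 2) else 0) := by
      intro n
      rw [pow_add, h2, one_mul]
    simp only [h4]
    have h5 := zmod2_add_self p.2 (∑ n ∈ Finset.range (M.M a b), if p.1 = (σ b * σ a) ^ n * σ b then (1 : ZMod 2) else 0)
    rw [← add_assoc]
    exact h5

/-- The sign homomorphism `W →* Perm (W × ZMod 2)`. -/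
noncomputable def phi : W →* Equiv.Perm (W × ZMod 2) := cs.lift ⟨eta cs, eta_liftable cs⟩

lemma phi_simple (i : B) : phi cs (σ i) = eta cs i := cs.lift_apply_simple (eta_liftable cs) i

/-- The sign invariant: `nn w t = 1` iff `t` is a "right inversion" of `w`. -/
noncomputable def nn (w t : W) : ZMod 2 := ((phi cs w) (t, 0)).2

lemma phi_apply (w : W) : ∀ t : W, ∀ ε : ZMod 2, (phi cs w) (t, ε) = (w * t * w⁻¹, ε + nn cs w t) := by
  induction w using cs.simple_induction_left with
  | one =>
    intro t ε
    unfold nn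
    simp
  | mul_simple_left w i ih =>
    intro t ε
    unfold nn
    rw [map_mul, Equiv.Perm.mul_apply, Equiv.Perm.mul_apply, ih, phi_simple, eta_apply, ih,
      eta_apply]
    apply Prod.ext
    · show σ i * (w * t * w⁻¹) * σ i = (σ i * w) * t * (σ i * w)⁻¹
      rw [mul_inv_rev, cs.inv_simple]
      simp only [mul_assoc]
    · show ε + _ + _ = _ + (0 + _ + _)
      ring

lemma nn_cocycle (w v t : W) : nn cs (w * v) t = nn cs v t + nn cs w (v * t * v⁻¹) := by
  unfold nn
  rw [map_mul, Equiv.Perm.mul_apply, phi_apply, phi_apply]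
  rfl

lemma nn_one (t : W) : nn cs 1 t = 0 := by unfold nn; simp

open Classical in
lemma nn_simple (i : B) (t : W) : nn cs (σ i) t = if t = σ i then 1 else 0 := by
  unfold nn
  rw [phi_simple, eta_apply]
  show 0 + _ = _
  rw [zero_add]

lemma nn_inv_conj (q t : W) : nn cs q⁻¹ (q * t * q⁻¹) = nn cs q t := by
  have h := nn_cocycle cs q⁻¹ q t
  rw [inv_mul_cancel, nn_one] at h
  rcases zmod2_cases (nn cs q t) with h1 | h1 <;> rcases zmod2_cases (nn cs q⁻¹ (q * t * q⁻¹)) with h2 | h2 <;>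
    rw [h1, h2] at h ⊢ <;> first | rfl | (exfalso; revert h; decide)

lemma conj_eq_iff (g x y : W) : g * x * g⁻¹ = y ↔ x = g⁻¹ * y * g := by
  constructor
  · intro h; rw [← h]; group
  · intro h; rw [h]; group

lemma nn_reflection_self {t : W} (ht : cs.IsReflection t) : nn cs t t = 1 := by
  obtain ⟨q, i, rfl⟩ := ht
  have e1 : q * σ i * q⁻¹ = (q * σ i) * q⁻¹ := by group
  have h1 := nn_cocycle cs (q * σ i) q⁻¹ (q * σ i * q⁻¹)
  rw [← e1] at h1
  have e2 : q⁻¹ * (q * σ i * q⁻¹) * (q⁻¹)⁻¹ = σ i := by group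
  rw [e2] at h1
  have h2 := nn_cocycle cs q (σ i) (σ i)
  have e3 : σ i * σ i * (σ i)⁻¹ = σ i := by
    rw [cs.inv_simple, cs.simple_mul_simple_cancel_right]
  rw [e3, nn_simple] at h2
  rw [if_pos rfl] at h2
  have h3 : nn cs q⁻¹ (q * σ i * q⁻¹) = nn cs q (σ i) := nn_inv_conj cs q (σ i)
  rw [h1, h2, h3]
  rcases zmod2_cases (nn cs q (σ i)) with h | h <;> rw [h] <;> decide

open Classical in
lemma nn_wordProd (ω : List B) (t : W) :
    nn cs (π ω) t = (List.count t (cs.rightInvSeq ω) : ZMod 2) := by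
  induction ω with
  | nil =>
    rw [wordProd_nil, nn_one]
    simp
  | cons i ω ih =>
    rw [wordProd_cons]
    have h1 := nn_cocycle cs (σ i) (π ω) t
    rw [h1, ih, nn_simple]
    have h2 : cs.rightInvSeq (i :: ω) = ((π ω)⁻¹ * σ i * π ω) :: cs.rightInvSeq ω := rfl
    rw [h2, List.count_cons]
    have h3 : (π ω * t * (π ω)⁻¹ = σ i) ↔ (t = (π ω)⁻¹ * σ i * π ω) := by
      rw [conj_eq_iff]
    push_cast
    rw [if_congr h3 rfl rfl]
    by_cases hx : t = (π ω)⁻¹ * σ i * π ω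
    · rw [if_pos hx, if_pos (beq_iff_eq.mpr hx.symm)]
    · rw [if_neg hx, if_neg (fun hc => hx ((beq_iff_eq.mp hc).symm))]

lemma isRightInversion_iff_nn_eq_one {w t : W} (ht : cs.IsReflection t) :
    cs.IsRightInversion w t ↔ nn cs w t = 1 := by
  constructor
  · rintro ⟨-, hlt⟩
    have hw : (w * t) * t = w := by
      rw [mul_assoc, ht.mul_self, mul_one]
    have h1 : nn cs ((w * t) * t) t = nn cs t t + nn cs (w * t) (t * t * t⁻¹) :=
      nn_cocycle cs (w * t) t t
    have e1 : t * t * t⁻¹ = t := by rw [ht.mul_self, one_mul, ht.inv]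
    rw [hw, e1, nn_reflection_self cs ht] at h1
    have h2 : nn cs (w * t) t = 0 := by
      rcases zmod2_cases (nn cs (w * t) t) with h | h
      · exact h
      · exfalso
        obtain ⟨ω, hred, hwt⟩ := cs.exists_reduced_word' (w * t)
        have hcount : (List.count t (cs.rightInvSeq ω) : ZMod 2) = 1 := by
          rw [← nn_wordProd, ← hwt, h]
        have hmem : t ∈ cs.rightInvSeq ω := by
          by_contra hmem
          rw [List.count_eq_zero_of_not_mem hmem] at hcount
          simp at hcount
        have := (cs.isRightInversion_of_mem_rightInvSeq hred hmem).2
        rw [← hwt, hw] at this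
        omega
    rw [h2] at h1
    rw [h1, add_zero]
  · intro h
    refine ⟨ht, ?_⟩
    obtain ⟨ω, hred, hw⟩ := cs.exists_reduced_word' w
    rw [hw, nn_wordProd] at h
    have hmem : t ∈ cs.rightInvSeq ω := by
      by_contra hmem
      rw [List.count_eq_zero_of_not_mem hmem] at h
      simp at h
    have := (cs.isRightInversion_of_mem_rightInvSeq hred hmem).2
    rw [← hw] at this
    exact this

lemma not_isRightInversion_of_le {w t : W} (ht : cs.IsReflection t) (hle : ℓ w ≤ ℓ (w * t)) :
    nn cs w t = 0 := by
  rcases zmod2_cases (nn cs w t) with h | h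
  · exact h
  · have := ((isRightInversion_iff_nn_eq_one cs ht).mpr h).2
    omega

theorem strong_exchange_right {w t : W} (ht : cs.IsReflection t) (hlt : ℓ (w * t) < ℓ w)
    {ω : List B} (hred : cs.IsReduced ω) (hw : w = π ω) :
    ∃ j < ω.length, w * t = π (ω.eraseIdx j) := by
  have h1 : nn cs w t = 1 := (isRightInversion_iff_nn_eq_one cs ht).mp ⟨ht, hlt⟩
  rw [hw, nn_wordProd] at h1
  have hmem : t ∈ cs.rightInvSeq ω := by
    by_contra hmem
    rw [List.count_eq_zero_of_not_mem hmem] at h1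
    simp at h1
  obtain ⟨j, hj, hjt⟩ := List.mem_iff_getElem.mp hmem
  rw [cs.length_rightInvSeq] at hj
  refine ⟨j, hj, ?_⟩
  have hgd : (cs.rightInvSeq ω).getD j 1 = t := by
    rw [List.getD_eq_getElem _ _ (by rw [cs.length_rightInvSeq]; exact hj), hjt]
  rw [hw, ← hgd]
  exact cs.wordProd_mul_getD_rightInvSeq ω j

theorem strong_exchange_left {w t : W} (ht : cs.IsReflection t) (hlt : ℓ (t * w) < ℓ w)
    {ω : List B} (hred : cs.IsReduced ω) (hw : w = π ω) :
    ∃ j < ω.length, t * w = π (ω.eraseIdx j) := by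
  have hinv : ℓ (w⁻¹ * t) < ℓ w⁻¹ := by
    have e1 : ℓ (w⁻¹ * t) = ℓ (t * w) := by
      rw [← cs.length_inv (w⁻¹ * t)]
      congr 1
      rw [mul_inv_rev, ht.inv, inv_inv]
    rw [e1, cs.length_inv]
    exact hlt
  have h1 : nn cs w⁻¹ t = 1 := (isRightInversion_iff_nn_eq_one cs ht).mp ⟨ht, hinv⟩
  have hrev : w⁻¹ = π ω.reverse := by rw [hw, wordProd_reverse]
  rw [hrev, nn_wordProd] at h1
  have hmem : t ∈ cs.rightInvSeq ω.reverse := by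
    by_contra hmem
    rw [List.count_eq_zero_of_not_mem hmem] at h1
    simp at h1
  rw [cs.rightInvSeq_reverse] at hmem
  have hmem2 : t ∈ cs.leftInvSeq ω := List.mem_reverse.mp hmem
  obtain ⟨j, hj, hjt⟩ := List.mem_iff_getElem.mp hmem2
  rw [cs.length_leftInvSeq] at hj
  refine ⟨j, hj, ?_⟩
  have hgd : (cs.leftInvSeq ω).getD j 1 = t := by
    rw [List.getD_eq_getElem _ _ (by rw [cs.length_leftInvSeq]; exact hj), hjt]
  rw [hw, ← hgd]
  exact cs.getD_leftInvSeq_mul_wordProd ω j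
/-! ### Deletion property and parabolic subgroups -/

theorem deletion {ω : List B} (h : ¬ cs.IsReduced ω) :
    ∃ ω', ω' <+ ω ∧ π ω' = π ω ∧ ω'.length < ω.length := by
  induction ω with
  | nil =>
    exfalso
    apply h
    unfold CoxeterSystem.IsReduced
    simp
  | cons i ω ih =>
    by_cases hred : cs.IsReduced ω
    · have hlt : ℓ (σ i * π ω) < ℓ (π ω) := by
        rcases cs.length_simple_mul (π ω) i with h1 | h1
        · exfalso
          apply h
          unfold CoxeterSystem.IsReduced
          rw [wordProd_cons, h1, hred]
          simp
        · rw [hred] at h1 ⊢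
          omega
      obtain ⟨j, hj, hex⟩ := strong_exchange_left cs (cs.isReflection_simple i) hlt hred rfl
      refine ⟨ω.eraseIdx j, (List.eraseIdx_sublist ω j).trans (List.sublist_cons_self i ω), ?_, ?_⟩
      · rw [wordProd_cons, ← hex]
      · have := List.length_eraseIdx_add_one hj
        simp only [List.length_cons]
        omega
    · obtain ⟨ω', hsub, hprod, hlen⟩ := ih hred
      refine ⟨i :: ω', hsub.cons₂ i, ?_, ?_⟩
      · rw [wordProd_cons, wordProd_cons, hprod]
      · simp only [List.length_cons]
        omega

theorem exists_reduced_subword (ω : List B) :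
    ∃ ω', ω' <+ ω ∧ cs.IsReduced ω' ∧ π ω' = π ω := by
  generalize hn : ω.length = n
  induction n using Nat.strong_induction_on generalizing ω with
  | _ n ih =>
    by_cases hred : cs.IsReduced ω
    · exact ⟨ω, List.Sublist.refl ω, hred, rfl⟩
    · obtain ⟨ω', hsub, hprod, hlen⟩ := deletion cs hred
      obtain ⟨ω'', hsub', hred'', hprod''⟩ := ih ω'.length (by omega) ω' rfl
      exact ⟨ω'', hsub'.trans hsub, hred'', by rw [hprod'', hprod]⟩

lemma simple_mem_parabolic_of_mem {X : Set B} {i : B} (hi : i ∈ X) :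
    σ i ∈ cs.parabolic X :=
  Subgroup.subset_closure ⟨i, hi, rfl⟩

lemma parabolic_mono {X Y : Set B} (h : X ⊆ Y) : cs.parabolic X ≤ cs.parabolic Y :=
  Subgroup.closure_mono (Set.image_mono h)

lemma wordProd_mem_parabolic {X : Set B} {ω : List B} (hω : ∀ i ∈ ω, i ∈ X) :
    π ω ∈ cs.parabolic X := by
  induction ω with
  | nil =>
    rw [wordProd_nil]
    exact Subgroup.one_mem _
  | cons i ω' ih =>
    rw [wordProd_cons]
    exact mul_mem (simple_mem_parabolic_of_mem cs (hω i (List.mem_cons_self)))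
      (ih fun j hj => hω j (List.mem_cons_of_mem i hj))

lemma mem_parabolic_iff_exists_word {X : Set B} {w : W} :
    w ∈ cs.parabolic X ↔ ∃ ω : List B, (∀ i ∈ ω, i ∈ X) ∧ w = π ω := by
  constructor
  · intro hw
    induction hw using Subgroup.closure_induction with
    | mem x hx =>
      obtain ⟨i, hi, rfl⟩ := hx
      exact ⟨[i], by simpa using hi, (cs.wordProd_singleton i).symm⟩
    | one => exact ⟨[], by simp, by simp⟩
    | mul x y hx hy ihx ihy =>
      obtain ⟨ω₁, h₁, rfl⟩ := ihx
      obtain ⟨ω₂, h₂, rfl⟩ := ihy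
      refine ⟨ω₁ ++ ω₂, ?_, (cs.wordProd_append ω₁ ω₂).symm⟩
      intro i hi
      rcases List.mem_append.mp hi with h | h
      · exact h₁ i h
      · exact h₂ i h
    | inv x hx ihx =>
      obtain ⟨ω, h₁, rfl⟩ := ihx
      refine ⟨ω.reverse, ?_, (cs.wordProd_reverse ω).symm⟩
      intro i hi
      exact h₁ i (List.mem_reverse.mp hi)
  · rintro ⟨ω, hω, rfl⟩
    exact wordProd_mem_parabolic cs hω

lemma mem_parabolic_iff_exists_reduced_word {X : Set B} {w : W} :
    w ∈ cs.parabolic X ↔ ∃ ω : List B, cs.IsReduced ω ∧ (∀ i ∈ ω, i ∈ X) ∧ w = π ω := by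
  constructor
  · intro hw
    obtain ⟨ω, hω, rfl⟩ := (mem_parabolic_iff_exists_word cs).mp hw
    obtain ⟨ω', hsub, hred, hprod⟩ := exists_reduced_subword cs ω
    exact ⟨ω', hred, fun i hi => hω i (hsub.mem hi), hprod.symm⟩
  · rintro ⟨ω, -, hω, rfl⟩
    exact wordProd_mem_parabolic cs hω

/-! ### Minimal coset representatives -/

lemma length_simple_mul_of_le {w : W} {t : B} (h : ℓ w ≤ ℓ (σ t * w)) :
    ℓ (σ t * w) = ℓ w + 1 := by
  rcases cs.length_simple_mul w t with h1 | h1 <;> omega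

lemma length_mul_simple_of_le {w : W} {t : B} (h : ℓ w ≤ ℓ (w * σ t)) :
    ℓ (w * σ t) = ℓ w + 1 := by
  rcases cs.length_mul_simple w t with h1 | h1 <;> omega

/-- Key additivity: if `w` has minimal length in `W_T w` then `ℓ(aw) = ℓ(a) + ℓ(w)`
for all `a ∈ W_T`. -/
lemma length_mul_of_isLeftMin {T : Set B} {w : W}
    (hw : ∀ a ∈ cs.parabolic T, ℓ w ≤ ℓ (a * w)) :
    ∀ a ∈ cs.parabolic T, ℓ (a * w) = ℓ a + ℓ w := by
  intro a ha
  generalize hn : ℓ a = n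
  induction n using Nat.strong_induction_on generalizing a with
  | _ n ih =>
    rcases eq_or_ne a 1 with rfl | hne
    · rw [one_mul, ← hn, cs.length_one, zero_add]
    · obtain ⟨α, hαred, hαX, hαw⟩ := (mem_parabolic_iff_exists_reduced_word cs).mp ha
      have hα0 : α ≠ [] := by
        rintro rfl
        rw [wordProd_nil] at hαw
        exact hne hαw
      obtain ⟨t, α', rfl⟩ := List.exists_cons_of_ne_nil hα0
      have ht : t ∈ T := hαX t (List.mem_cons_self)
      have hα'X : ∀ i ∈ α', i ∈ T := fun i hi => hαX i (List.mem_cons_of_mem t hi)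
      have ha' : π α' ∈ cs.parabolic T := wordProd_mem_parabolic cs hα'X
      have hred' : cs.IsReduced α' := by
        have := hαred.drop 1
        simpa using this
      have hℓa : ℓ a = α'.length + 1 := by
        rw [hαw]
        have := hαred
        unfold CoxeterSystem.IsReduced at this
        rw [this]
        simp
      have hlt' : ℓ (π α') < n := by
        rw [hred' ]
        omega
      have ih' : ℓ (π α' * w) = ℓ (π α') + ℓ w := ih (ℓ (π α')) hlt' (π α') ha' rfl
      have hup : ℓ (σ t * (π α' * w)) = ℓ (π α' * w) + 1 := by
        rcases cs.length_simple_mul (π α' * w) t with h1 | h1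
        · exact h1
        · exfalso
          -- exchange argument
          obtain ⟨ω, hωred, hωw⟩ := cs.exists_reduced_word' w
          have hcomb : cs.IsReduced (α' ++ ω) := by
            unfold CoxeterSystem.IsReduced
            rw [wordProd_append, ← hωw, ih', List.length_append]
            have e1 : ℓ (π α') = α'.length := hred'
            have e2 : ℓ w = ω.length := by rw [hωw]; exact hωred
            omega
          have hltx : ℓ (σ t * (π α' * w)) < ℓ (π α' * w) := by omega
          have hprod : π α' * w = π (α' ++ ω) := by rw [wordProd_append, ← hωw]
          obtain ⟨j, hj, hex⟩ :=
            strong_exchange_left cs (cs.isReflection_simple t) hltx hcomb hprod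
          rcases lt_or_ge j α'.length with hjlt | hjge
          · rw [List.eraseIdx_append_of_lt_length hjlt] at hex
            have hex2 : (σ t * π α') * w = π (α'.eraseIdx j) * w := by
              rw [mul_assoc, hex, wordProd_append, ← hωw]
            have hex3 : σ t * π α' = π (α'.eraseIdx j) := mul_right_cancel hex2
            have hlen1 : ℓ (σ t * π α') ≤ (α'.eraseIdx j).length := by
              rw [hex3]; exact cs.length_wordProd_le _
            have hlen2 : (α'.eraseIdx j).length + 1 = α'.length :=
              List.length_eraseIdx_add_one hjlt
            have haw : a = σ t * π α' := by rw [hαw, wordProd_cons]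
            rw [← haw] at hlen1
            omega
          · rw [List.eraseIdx_append_of_length_le hjge] at hex
            set b : W := (π α')⁻¹ * σ t * π α' with hb
            have hbmem : b ∈ cs.parabolic T := by
              refine mul_mem (mul_mem (inv_mem ha') ?_) ha'
              exact simple_mem_parabolic_of_mem cs ht
            have hex2 : b * w = π (ω.eraseIdx (j - α'.length)) := by
              rw [hb]
              have : π α' * (((π α')⁻¹ * σ t * π α') * w) = π α' * ((π α')⁻¹ * (σ t * (π α' * w))) := by
                group
              have h5 : ((π α')⁻¹ * σ t * π α') * w = (π α')⁻¹ * (σ t * (π α' * w)) := by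
                group
              rw [h5, hex, wordProd_append]
              group
            have hlen1 : ℓ (b * w) ≤ (ω.eraseIdx (j - α'.length)).length := by
              rw [hex2]; exact cs.length_wordProd_le _
            have hjlt2 : j - α'.length < ω.length := by
              rw [List.length_append] at hj
              omega
            have hlen2 : (ω.eraseIdx (j - α'.length)).length + 1 = ω.length :=
              List.length_eraseIdx_add_one hjlt2
            have hww : ℓ w = ω.length := by rw [hωw, hωred]
            have := hw b hbmem
            omega
      have haw2 : a * w = σ t * (π α' * w) := by rw [hαw, wordProd_cons, mul_assoc]
      rw [haw2, hup, ih', hred', ← hn, hℓa]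
      omega

lemma leftMinRep_mem (T : Set B) (u : W) :
    ∃ a ∈ cs.parabolic T, cs.leftMinRep T u = a * u := by
  show cs.leftMinRep T u ∈ {w : W | ∃ a ∈ cs.parabolic T, w = a * u}
  unfold CoxeterSystem.leftMinRep
  exact Function.argminOn_mem _ _ _

lemma leftMinRep_le (T : Set B) (u : W) {b : W} (hb : b ∈ cs.parabolic T) :
    ℓ (cs.leftMinRep T u) ≤ ℓ (b * u) := by
  unfold CoxeterSystem.leftMinRep
  exact Function.argminOn_le cs.length _
    (⟨b, hb, rfl⟩ : b * u ∈ {w : W | ∃ a ∈ cs.parabolic T, w = a * u})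

lemma isLeftMin_leftMinRep (T : Set B) (u : W) :
    ∀ a ∈ cs.parabolic T, ℓ (cs.leftMinRep T u) ≤ ℓ (a * cs.leftMinRep T u) := by
  intro a ha
  obtain ⟨a₀, ha₀, h₀⟩ := leftMinRep_mem cs T u
  have : a * cs.leftMinRep T u = (a * a₀) * u := by rw [h₀]; group
  rw [this]
  exact leftMinRep_le cs T u (mul_mem ha ha₀)

lemma argminOn_set_congr {α : Type*} (f : α → ℕ)
    {s t : Set α} (h : s = t) (hs : s.Nonempty) (ht : t.Nonempty) :
    Function.argminOn f s hs = Function.argminOn f t ht := by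
  subst h
  rfl

lemma leftMinRep_mul_of_mem {T : Set B} {a : W} (ha : a ∈ cs.parabolic T) (u : W) :
    cs.leftMinRep T (a * u) = cs.leftMinRep T u := by
  unfold CoxeterSystem.leftMinRep
  apply argminOn_set_congr
  ext w
  constructor
  · rintro ⟨b, hb, rfl⟩
    exact ⟨b * a, mul_mem hb ha, by group⟩
  · rintro ⟨b, hb, rfl⟩
    exact ⟨b * a⁻¹, mul_mem hb (inv_mem ha), by group⟩

lemma leftMinRep_eq_self_of_isLeftMin {T : Set B} {w : W}
    (hw : ∀ a ∈ cs.parabolic T, ℓ w ≤ ℓ (a * w)) :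
    cs.leftMinRep T w = w := by
  obtain ⟨a, ha, hma⟩ := leftMinRep_mem cs T w
  have h1 : ℓ (a * w) = ℓ a + ℓ w := length_mul_of_isLeftMin cs hw a ha
  have h2 : ℓ (cs.leftMinRep T w) ≤ ℓ w := by
    have := leftMinRep_le cs T w (Subgroup.one_mem _)
    rwa [one_mul] at this
  rw [hma] at h2 ⊢
  have ha0 : ℓ a = 0 := by omega
  have : a = 1 := cs.length_eq_zero_iff.mp ha0
  rw [this, one_mul]

/-- Descent criterion for left-minimality. -/
lemma isLeftMin_of_simple {T : Set B} {w : W}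
    (hW : ∀ t ∈ T, ℓ w < ℓ (σ t * w)) :
    ∀ a ∈ cs.parabolic T, ℓ w ≤ ℓ (a * w) := by
  obtain ⟨a₀, ha₀, hma⟩ := leftMinRep_mem cs T w
  have hmmin := isLeftMin_leftMinRep cs T w
  generalize hgen : cs.leftMinRep T w = m at hma hmmin
  have hc : a₀⁻¹ ∈ cs.parabolic T := inv_mem ha₀
  have hwm : w = a₀⁻¹ * m := by rw [hma]; group
  rcases eq_or_ne a₀⁻¹ 1 with h1 | h1
  · rw [h1, one_mul] at hwm
    rw [hwm]
    exact hmmin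
  · exfalso
    obtain ⟨γ, hγred, hγT, hγc⟩ := (mem_parabolic_iff_exists_reduced_word cs).mp hc
    have hγ0 : γ ≠ [] := by
      rintro rfl
      rw [wordProd_nil] at hγc
      exact h1 hγc
    obtain ⟨t, γ', rfl⟩ := List.exists_cons_of_ne_nil hγ0
    have ht : t ∈ T := hγT t (List.mem_cons_self)
    have hγ'T : ∀ i ∈ γ', i ∈ T := fun i hi => hγT i (List.mem_cons_of_mem t hi)
    have hγ' : π γ' ∈ cs.parabolic T := wordProd_mem_parabolic cs hγ'T
    have hred' : cs.IsReduced γ' := by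
      have := hγred.drop 1
      simpa using this
    have hℓc : ℓ (a₀⁻¹) = γ'.length + 1 := by
      rw [hγc]
      have := hγred
      unfold CoxeterSystem.IsReduced at this
      rw [this]
      simp
    have hgw : σ t * w = π γ' * m := by
      rw [hwm, hγc, wordProd_cons, ← mul_assoc, ← mul_assoc, cs.simple_mul_simple_self, one_mul]
    have h2 : ℓ (σ t * w) = ℓ (π γ') + ℓ m := by
      rw [hgw]
      exact length_mul_of_isLeftMin cs hmmin (π γ') hγ'
    have h3 : ℓ w = ℓ (a₀⁻¹) + ℓ m := by
      rw [hwm]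
      exact length_mul_of_isLeftMin cs hmmin a₀⁻¹ hc
    have h4 := hW t ht
    rw [hred'] at h2
    omega

/-- Descent criterion for right-minimality (the `IsMinimalCosetRep` predicate). -/
lemma isMinimalCosetRep_of_simple {X : Set B} {w : W}
    (hW : ∀ t ∈ X, ℓ w < ℓ (w * σ t)) :
    cs.IsMinimalCosetRep X w := by
  intro u hu
  have hleft : ∀ t ∈ X, ℓ w⁻¹ < ℓ (σ t * w⁻¹) := by
    intro t htX
    have e1 : ℓ (σ t * w⁻¹) = ℓ (w * σ t) := by
      rw [← cs.length_inv (σ t * w⁻¹), mul_inv_rev, inv_inv, cs.inv_simple]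
    rw [e1, cs.length_inv]
    exact hW t htX
  have := isLeftMin_of_simple cs hleft u⁻¹ (inv_mem hu)
  have e2 : ℓ (u⁻¹ * w⁻¹) = ℓ (w * u) := by
    rw [← cs.length_inv (u⁻¹ * w⁻¹), mul_inv_rev, inv_inv, inv_inv]
  rw [cs.length_inv, e2] at this
  exact this

lemma mul_leftMinRep_inv_mem (T : Set B) (u : W) :
    u * (cs.leftMinRep T u)⁻¹ ∈ cs.parabolic T := by
  obtain ⟨a, ha, hma⟩ := leftMinRep_mem cs T u
  have : u * (cs.leftMinRep T u)⁻¹ = a⁻¹ := by rw [hma]; group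
  rw [this]
  exact inv_mem ha

/-! ### The key double-coset lemma -/

lemma key_lemma {T Y : Set B} {v₁ : W}
    (hv₁ : ∀ a ∈ cs.parabolic T, ℓ v₁ ≤ ℓ (a * v₁)) (ω : List B) (hω : ∀ i ∈ ω, i ∈ Y) :
    (v₁⁻¹ * cs.leftMinRep T (v₁ * π ω) ∈ cs.parabolic Y) ∧
    (v₁ * π ω * (cs.leftMinRep T (v₁ * π ω))⁻¹ ∈
      cs.parabolic {t ∈ T | v₁⁻¹ * σ t * v₁ ∈ cs.parabolic Y}) := by
  induction ω using List.reverseRecOn with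
  | nil =>
    rw [wordProd_nil, mul_one, leftMinRep_eq_self_of_isLeftMin cs hv₁]
    constructor
    · rw [inv_mul_cancel]
      exact Subgroup.one_mem _
    · rw [mul_inv_cancel]
      exact Subgroup.one_mem _
  | append_singleton ω j ih =>
    specialize ih (fun i hi => hω i (List.mem_append_left _ hi))
    have hj : j ∈ Y := hω j (List.mem_append_right _ (List.mem_singleton_self j))
    set Y₀ : Set B := {t ∈ T | v₁⁻¹ * σ t * v₁ ∈ cs.parabolic Y} with hY₀
    obtain ⟨ihc, ihz⟩ := ih
    have hY₀T : Y₀ ⊆ T := fun t ht => ht.1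
    -- names
    have hu'min := isLeftMin_leftMinRep cs T (v₁ * π ω)
    have hz'T : v₁ * π ω * (cs.leftMinRep T (v₁ * π ω))⁻¹ ∈ cs.parabolic T :=
      mul_leftMinRep_inv_mem cs T (v₁ * π ω)
    generalize hgen : cs.leftMinRep T (v₁ * π ω) = u' at ihc ihz hu'min hz'T
    set z' : W := v₁ * π ω * u'⁻¹ with hz'
    have hz'u' : z' * u' = v₁ * π ω := by rw [hz']; group
    have hprod : v₁ * π (ω ++ [j]) = z' * (u' * σ j) := by
      rw [wordProd_append, wordProd_singleton, ← mul_assoc, ← hz'u']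
      group
    -- main case analysis
    by_cases hmin : ∀ t ∈ T, ℓ (u' * σ j) < ℓ (σ t * (u' * σ j))
    · -- `u' * σ j` is the new minimal representative
      have hminrep : cs.leftMinRep T (v₁ * π (ω ++ [j])) = u' * σ j := by
        rw [hprod, leftMinRep_mul_of_mem cs hz'T,
          leftMinRep_eq_self_of_isLeftMin cs (isLeftMin_of_simple cs hmin)]
      rw [hminrep]
      constructor
      · have : v₁⁻¹ * (u' * σ j) = (v₁⁻¹ * u') * σ j := by group
        rw [this]
        exact mul_mem ihc (simple_mem_parabolic_of_mem cs hj)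
      · have : v₁ * π (ω ++ [j]) * (u' * σ j)⁻¹ = z' := by
          rw [hprod]; group
        rw [this]
        exact ihz
    · push_neg at hmin
      obtain ⟨t, htT, htle⟩ := hmin
      -- first, the length must have gone up
      have hup : ℓ (u' * σ j) = ℓ u' + 1 := by
        rcases cs.length_mul_simple u' j with h1 | h1
        · exact h1
        · exfalso
          -- length went down: then u'σj is automatically minimal, contradiction
          have hst : ℓ (σ t * u') = ℓ u' + 1 :=
            length_simple_mul_of_le cs (hu'min (σ t) (simple_mem_parabolic_of_mem cs htT))
          have : ℓ (σ t * (u' * σ j)) ≥ ℓ (σ t * u') - 1 := by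
            have := cs.length_mul_simple (σ t * u') j
            rw [mul_assoc] at this
            omega
          omega
      have hlt : ℓ (σ t * (u' * σ j)) < ℓ (u' * σ j) := by
        have := cs.length_simple_mul_ne (u' * σ j) t
        omega
      obtain ⟨ωu, hωured, hωuw⟩ := cs.exists_reduced_word' u'
      have hcombred : cs.IsReduced (ωu ++ [j]) := by
        unfold CoxeterSystem.IsReduced
        rw [wordProd_append, wordProd_singleton, ← hωuw, List.length_append]
        have e1 : ℓ u' = ωu.length := by rw [hωuw]; exact hωured
        simp only [List.length_singleton]
        omega
      have hcombw : u' * σ j = π (ωu ++ [j]) := by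
        rw [wordProd_append, wordProd_singleton, ← hωuw]
      obtain ⟨k, hk, hex⟩ :=
        strong_exchange_left cs (cs.isReflection_simple t) hlt hcombred hcombw
      rcases lt_or_ge k ωu.length with hklt | hkge
      · exfalso
        rw [List.eraseIdx_append_of_lt_length hklt] at hex
        have hex2 : (σ t * u') * σ j = π (ωu.eraseIdx k) * σ j := by
          rw [mul_assoc, hex, wordProd_append, wordProd_singleton]
        have hex3 : σ t * u' = π (ωu.eraseIdx k) := mul_right_cancel hex2
        have hlen1 : ℓ (σ t * u') ≤ (ωu.eraseIdx k).length := by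
          rw [hex3]; exact cs.length_wordProd_le _
        have hlen2 : (ωu.eraseIdx k).length + 1 = ωu.length :=
          List.length_eraseIdx_add_one hklt
        have hst : ℓ (σ t * u') = ℓ u' + 1 :=
          length_simple_mul_of_le cs (hu'min (σ t) (simple_mem_parabolic_of_mem cs htT))
        have e1 : ℓ u' = ωu.length := by rw [hωuw]; exact hωured
        omega
      · -- the exchanged letter is the last one: σ t * u' = u' * σ j
        have hkeq : (ωu ++ [j]).eraseIdx k = ωu := by
          rw [List.eraseIdx_append_of_length_le hkge]
          have : k - ωu.length = 0 := by
            rw [List.length_append, List.length_singleton] at hk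
            omega
          rw [this]
          simp
        rw [hkeq, ← hωuw] at hex
        -- hex : σ t * (u' * σ j) = u'
        have hflip : u' * σ j = σ t * u' := by
          have := congrArg (fun x => σ t * x) hex
          rw [← mul_assoc, cs.simple_mul_simple_self, one_mul] at this
          rw [this]
        have hsigt : σ t = u' * σ j * u'⁻¹ := by rw [hflip]; group
        have htY₀ : t ∈ Y₀ := by
          refine ⟨htT, ?_⟩
          have : v₁⁻¹ * σ t * v₁ = (v₁⁻¹ * u') * σ j * (v₁⁻¹ * u')⁻¹ := by
            rw [hsigt]; group
          rw [this]
          exact mul_mem (mul_mem ihc (simple_mem_parabolic_of_mem cs hj)) (inv_mem ihc)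
        have hz'σt : z' * σ t ∈ cs.parabolic T :=
          mul_mem hz'T (simple_mem_parabolic_of_mem cs htT)
        have hminrep : cs.leftMinRep T (v₁ * π (ω ++ [j])) = u' := by
          have e2 : v₁ * π (ω ++ [j]) = (z' * σ t) * u' := by
            rw [hprod, hflip]; group
          rw [e2, leftMinRep_mul_of_mem cs hz'σt,
            leftMinRep_eq_self_of_isLeftMin cs hu'min]
        rw [hminrep]
        constructor
        · exact ihc
        · have e3 : v₁ * π (ω ++ [j]) * u'⁻¹ = z' * σ t := by
            rw [hprod, hflip]; group
          rw [e3]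
          exact mul_mem ihz (simple_mem_parabolic_of_mem cs htY₀)

/-! ### The geometric representation, just enough for injectivity of `simple`. -/

/-- Matrix of the standard bilinear form. -/
noncomputable def gd (M : CoxeterMatrix B) (a b : B) : ℝ := -Real.cos (Real.pi / M.M a b)

lemma gd_symm (a b : B) : gd M a b = gd M b a := by
  unfold gd
  rw [M.symmetric a b]

lemma gd_self (a : B) : gd M a a = 1 := by
  unfold gd
  rw [M.diagonal a]
  simp [Real.cos_pi]

/-- Pairing of a vector with the basis vector `e_a`. -/
noncomputable def gip (M : CoxeterMatrix B) (a : B) (v : B →₀ ℝ) : ℝ :=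
  v.sum fun b x => x * gd M a b

lemma gip_add (a : B) (u v : B →₀ ℝ) : gip M a (u + v) = gip M a u + gip M a v :=
  Finsupp.sum_add_index' (fun _ => zero_mul _) (fun b x y => add_mul x y _)

lemma gip_smul (a : B) (r : ℝ) (v : B →₀ ℝ) : gip M a (r • v) = r * gip M a v := by
  unfold gip
  rw [Finsupp.sum_smul_index (h := fun b x => x * gd M a b) (fun i => zero_mul _),
    Finsupp.mul_sum]
  apply Finsupp.sum_congr
  intro b _
  ring

lemma gip_single (a b : B) (x : ℝ) : gip M a (Finsupp.single b x) = x * gd M a b :=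
  Finsupp.sum_single_index (zero_mul _)

lemma gip_sub (a : B) (u v : B →₀ ℝ) : gip M a (u - v) = gip M a u - gip M a v := by
  have : u - v = u + (-1 : ℝ) • v := by module
  rw [this, gip_add, gip_smul]
  ring

/-- The reflection in `e_a`. -/
noncomputable def greflFun (M : CoxeterMatrix B) (a : B) (v : B →₀ ℝ) : B →₀ ℝ :=
  v - (2 * gip M a v) • Finsupp.single a 1

lemma gip_grefl (a : B) (v : B →₀ ℝ) : gip M a (greflFun M a v) = -gip M a v := by
  unfold greflFun
  rw [gip_sub, gip_smul, gip_single, gd_self]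
  ring

lemma greflFun_involutive (a : B) : Function.Involutive (greflFun M a) := by
  intro v
  have h1 := gip_grefl (M := M) a v
  show greflFun M a (greflFun M a v) = v
  conv_lhs => rw [greflFun, h1]
  unfold greflFun
  module

noncomputable def grefl (M : CoxeterMatrix B) (a : B) : Equiv.Perm (B →₀ ℝ) :=
  (greflFun_involutive (M := M) a).toPerm

lemma grefl_apply (a : B) (v : B →₀ ℝ) :
    grefl M a v = v - (2 * gip M a v) • Finsupp.single a 1 := rfl

/-- The sequence of coefficients of the orbit of `v` under `(grefl a * grefl b)^k`. -/
noncomputable def gpq (cc Av Bv : ℝ) : ℕ → ℝ × ℝ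
  | 0 => (0, 0)
  | (k+1) =>
      let z := gpq cc Av Bv k
      let q' := -z.2 + 2*cc*z.1 - 2*Bv
      (-z.1 + 2*cc*q' - 2*Av, q')

/-- The main 2-dimensional computation: the orbit coefficients vanish at step `m`. -/
lemma gpq_vanish (m : ℕ) (hm : 2 ≤ m) (Av Bv : ℝ) :
    gpq (Real.cos (Real.pi / m)) Av Bv m = (0, 0) := by
  set θ : ℝ := Real.pi / m with hθ
  have hθpos : 0 < θ := by
    apply div_pos Real.pi_pos
    positivity
  have hθlt : θ < Real.pi := by
    rw [hθ, div_lt_iff₀ (by positivity : (0:ℝ) < m)]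
    have h2 : (2:ℝ) ≤ m := by exact_mod_cast hm
    nlinarith [Real.pi_pos]
  set cc : ℝ := Real.cos θ with hcc
  have hs : Real.sin θ ≠ 0 := ne_of_gt (Real.sin_pos_of_pos_of_lt_pi hθpos hθlt)
  have hcc2 : 1 - cc^2 ≠ 0 := by
    have h1 : Real.sin θ ^ 2 + Real.cos θ ^ 2 = 1 := Real.sin_sq_add_cos_sq θ
    have h2 : Real.sin θ ^ 2 ≠ 0 := pow_ne_zero 2 hs
    rw [hcc]
    intro h
    exact h2 (by linarith)
  set pstar : ℝ := -(Av + cc*Bv)/(1 - cc^2) with hpstar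
  set qstar : ℝ := -(Bv + cc*Av)/(1 - cc^2) with hqstar
  have hpdef : pstar * (1 - cc^2) = -(Av + cc*Bv) := by
    rw [hpstar]; field_simp
  have hqdef : qstar * (1 - cc^2) = -(Bv + cc*Av) := by
    rw [hqstar]; field_simp
  have key : qstar - cc*pstar + Bv = 0 := by
    have h3 : (qstar - cc*pstar + Bv) * (1 - cc^2) = 0 := by
      linear_combination hqdef - cc * hpdef
    rcases mul_eq_zero.mp h3 with h | h
    · exact h
    · exact absurd h hcc2
  have key2 : pstar - cc*qstar + Av = 0 := by
    have h3 : (pstar - cc*qstar + Av) * (1 - cc^2) = 0 := by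
      linear_combination hpdef - cc * hqdef
    rcases mul_eq_zero.mp h3 with h | h
    · exact h
    · exact absurd h hcc2
  set z : ℕ → ℝ := fun k => (gpq cc Av Bv k).1 - pstar with hz
  set w : ℕ → ℝ := fun k => (gpq cc Av Bv k).2 - qstar with hw
  have hgpq2 : ∀ k, (gpq cc Av Bv (k+1)).2
      = -(gpq cc Av Bv k).2 + 2*cc*(gpq cc Av Bv k).1 - 2*Bv := fun k => rfl
  have hgpq1 : ∀ k, (gpq cc Av Bv (k+1)).1
      = -(gpq cc Av Bv k).1 + 2*cc*(-(gpq cc Av Bv k).2 + 2*cc*(gpq cc Av Bv k).1 - 2*Bv)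
        - 2*Av := fun k => rfl
  have hrecw : ∀ k, w (k+1) = -(w k) + 2*cc*(z k) := by
    intro k
    simp only [hw, hz, hgpq2]
    linear_combination (-2 : ℝ) * key
  have hrecz : ∀ k, z (k+1) = (4*cc^2-1)*(z k) - 2*cc*(w k) := by
    intro k
    simp only [hw, hz, hgpq1]
    linear_combination (-4*cc) * key - 2 * key2
  -- complex eigenvector argument
  set E : ℂ := Complex.exp (θ * Complex.I) with hE
  have hEne : E ≠ 0 := Complex.exp_ne_zero _
  have hccE : (cc : ℂ) = (E + E⁻¹)/2 := by
    rw [hcc, Complex.ofReal_cos, Complex.cos, hE, ← Complex.exp_neg]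
    ring_nf
  have hstep : ∀ (F : ℂ), F = E ∨ F = E⁻¹ → ∀ k,
      ((z (k+1) : ℂ) - F * (w (k+1))) = (F⁻¹)^2 * ((z k : ℂ) - F * (w k)) := by
    intro F hF k
    have hFne : F ≠ 0 := by
      rcases hF with rfl | rfl
      · exact hEne
      · exact inv_ne_zero hEne
    have hFcc : (cc : ℂ) = (F + F⁻¹)/2 := by
      rcases hF with rfl | rfl
      · exact hccE
      · rw [hccE, inv_inv]; ring
    rw [hrecz k, hrecw k]
    push_cast
    rw [hFcc]
    field_simp
    ring
  have hiter : ∀ (F : ℂ), F = E ∨ F = E⁻¹ → ∀ k,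
      ((z k : ℂ) - F * (w k)) = ((F⁻¹)^2)^k * ((z 0 : ℂ) - F * (w 0)) := by
    intro F hF k
    induction k with
    | zero => simp
    | succ k ih =>
      rw [hstep F hF k, ih, pow_succ]
      ring
  have hmθ : (m:ℝ) * θ = Real.pi := by
    rw [hθ]
    field_simp
  have hEm : E^(2*m) = 1 := by
    rw [hE, ← Complex.exp_nat_mul]
    have e : ((2*m : ℕ) : ℂ) * (↑θ * Complex.I) = 2 * ↑Real.pi * Complex.I := by
      have : ((m:ℝ) * θ : ℝ) = Real.pi := hmθ
      have e2 : ((m:ℂ)) * (θ:ℂ) = (Real.pi : ℂ) := by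
        exact_mod_cast congrArg Complex.ofReal this
      push_cast
      linear_combination 2 * Complex.I * e2
    rw [e, Complex.exp_two_pi_mul_I]
  have hpow : ∀ (F : ℂ), F = E ∨ F = E⁻¹ → ((F⁻¹)^2)^m = 1 := by
    intro F hF
    rcases hF with rfl | rfl
    · rw [← pow_mul, inv_pow, hEm, inv_one]
    · rw [inv_inv, ← pow_mul, hEm]
  have hE2 : E^2 ≠ 1 := by
    intro h
    rw [hE, ← Complex.exp_nat_mul] at h
    obtain ⟨n, hn⟩ := Complex.exp_eq_one_iff.mp h
    have hn' : ((2*θ : ℝ) : ℂ) * Complex.I = ((n * (2*Real.pi) : ℝ) : ℂ) * Complex.I := by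
      push_cast
      push_cast at hn
      linear_combination hn
    have hre : (2*θ : ℝ) = n * (2*Real.pi) := by
      have := mul_right_cancel₀ Complex.I_ne_zero hn'
      exact_mod_cast this
    have hnpos : 0 < (n:ℝ) := by nlinarith [Real.pi_pos]
    have hnlt : (n:ℝ) < 1 := by nlinarith [Real.pi_pos]
    have hn1 : (1:ℤ) ≤ n := by
      have : (0:ℤ) < n := by exact_mod_cast hnpos
      omega
    have : (1:ℝ) ≤ (n:ℝ) := by exact_mod_cast hn1
    linarith
  have hEsub : E - E⁻¹ ≠ 0 := by
    intro h
    apply hE2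
    have hEq : E = E⁻¹ := sub_eq_zero.mp h
    rw [pow_two]
    nth_rewrite 2 [hEq]
    exact mul_inv_cancel₀ hEne
  have h1 := hiter E (Or.inl rfl) m
  have h2 := hiter E⁻¹ (Or.inr rfl) m
  rw [hpow E (Or.inl rfl), one_mul] at h1
  rw [hpow E⁻¹ (Or.inr rfl), one_mul] at h2
  have hwm : (w m : ℂ) = (w 0 : ℂ) := by
    have h3 : (E - E⁻¹) * (w m : ℂ) = (E - E⁻¹) * (w 0 : ℂ) := by
      linear_combination h2 - h1
    exact mul_left_cancel₀ hEsub h3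
  have hzm : (z m : ℂ) = (z 0 : ℂ) := by
    linear_combination h1 + E * hwm
  have hwm' : w m = w 0 := by exact_mod_cast hwm
  have hzm' : z m = z 0 := by exact_mod_cast hzm
  have hz0 : (gpq cc Av Bv 0) = (0,0) := rfl
  have e1 : (gpq cc Av Bv m).1 = 0 := by
    have := hzm'
    simp only [hz, hz0] at this
    simpa using this
  have e2 : (gpq cc Av Bv m).2 = 0 := by
    have := hwm'
    simp only [hw, hz0] at this
    simpa using this
  exact Prod.ext e1 e2

lemma grefl_mul_pow_apply (a b : B) (v : B →₀ ℝ) (k : ℕ) :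
    ((grefl M a * grefl M b)^k) v
      = v + (gpq (-(gd M a b)) (gip M a v) (gip M b v) k).1 • Finsupp.single a 1
          + (gpq (-(gd M a b)) (gip M a v) (gip M b v) k).2 • Finsupp.single b 1 := by
  set cc : ℝ := -(gd M a b) with hccdef
  set Av : ℝ := gip M a v with hAv
  set Bv : ℝ := gip M b v with hBv
  have hgdab : gd M a b = -cc := by rw [hccdef]; ring
  have hgdba : gd M b a = -cc := by rw [← gd_symm]; exact hgdab
  induction k with
  | zero =>
    show v = v + (0:ℝ) • _ + (0:ℝ) • _
    module
  | succ k ih =>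
    have hsplit : ((grefl M a * grefl M b)^(k+1)) v
        = grefl M a (grefl M b (((grefl M a * grefl M b)^k) v)) := by
      rw [pow_succ']
      rfl
    rw [hsplit, ih]
    set p : ℝ := (gpq cc Av Bv k).1 with hp
    set q : ℝ := (gpq cc Av Bv k).2 with hq
    have hgipb : gip M b (v + p • Finsupp.single a 1 + q • Finsupp.single b 1)
        = Bv - cc*p + q := by
      simp only [gip_add, gip_smul, gip_single, gd_self, hgdba, ← hBv]
      ring
    simp only [grefl_apply]
    rw [hgipb]
    have hgipa : gip M a ((v + p • Finsupp.single a 1 + q • Finsupp.single b 1)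
          - (2 * (Bv - cc*p + q)) • Finsupp.single b 1)
        = Av + p - cc * (-q + 2*cc*p - 2*Bv) := by
      simp only [gip_sub, gip_add, gip_smul, gip_single, gd_self, hgdab, ← hAv, ← hBv]
      ring
    rw [hgipa]
    have e1 : (gpq cc Av Bv (k+1)).1
        = -p + 2*cc*(-q + 2*cc*p - 2*Bv) - 2*Av := rfl
    have e2 : (gpq cc Av Bv (k+1)).2 = -q + 2*cc*p - 2*Bv := rfl
    rw [e1, e2]
    module

lemma grefl_liftable : M.IsLiftable (grefl M) := by
  intro a b
  rcases eq_or_ne a b with rfl | hne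
  · rw [M.diagonal a, pow_one]
    ext v : 1
    show grefl M a (grefl M a v) = v
    exact greflFun_involutive (M := M) a v
  · rcases Nat.eq_zero_or_pos (M.M a b) with h0 | hpos
    · rw [h0, pow_zero]
    · have hm2 : 2 ≤ M.M a b := by
        have := M.off_diagonal a b hne
        omega
      ext v : 1
      rw [Equiv.Perm.one_apply, grefl_mul_pow_apply]
      have hcc : -(gd M a b) = Real.cos (Real.pi / M.M a b) := by
        unfold gd
        ring
      rw [hcc, gpq_vanish (M.M a b) hm2]
      show v + (0:ℝ) • _ + (0:ℝ) • _ = v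
      module


theorem simple_injective : Function.Injective cs.simple := by
  intro i j hij
  by_contra hne
  have h1 : grefl M i = grefl M j := by
    have := congrArg (cs.lift ⟨grefl M, grefl_liftable⟩) hij
    rwa [cs.lift_apply_simple, cs.lift_apply_simple] at this
  have h2 := congrArg (fun f : Equiv.Perm (B →₀ ℝ) => (f (Finsupp.single i (1:ℝ))) i) h1
  simp only [grefl_apply, Finsupp.sub_apply, Finsupp.smul_apply, smul_eq_mul,
    Finsupp.single_eq_same, gip_single, gd_self,
    Finsupp.single_eq_of_ne hne] at h2
  norm_num at h2



lemma simple_mem_parabolic {X : Set B} {i : B} (h : σ i ∈ cs.parabolic X) : i ∈ X := by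
  obtain ⟨ω, hred, hX, hw⟩ := (mem_parabolic_iff_exists_reduced_word cs).mp h
  have h1 : ℓ (π ω) = ω.length := hred
  rw [← hw, cs.length_simple] at h1
  obtain ⟨x, rfl⟩ := List.length_eq_one_iff.mp h1.symm
  rw [wordProd_singleton] at hw
  have hix : i = x := simple_injective cs hw
  exact hix ▸ hX x (List.mem_singleton_self x)

end CoxStmt

open CoxStmt List in
/-- (a) `π_T` maps `W × 𝒮^f` into `W_T × 𝒮^f_T`;
(b) `π_T` is the identity on `W_T × 𝒮^f_T`;
(c) `π_T` is equivariant under left multiplication by `W_T`;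
(d) `π_T` is order preserving for `⪯`. -/
theorem stmt_19 {B W : Type*} [Group W] {M : CoxeterMatrix B}
    (cs : CoxeterSystem M W) (T : Set B) :
    -- (a)
    (∀ (u : W) (X : Set B), ((cs.parabolic X : Set W)).Finite →
      (cs.piT T (u, X)).1 ∈ cs.parabolic T ∧ (cs.piT T (u, X)).2 ⊆ T ∧
        ((cs.parabolic (cs.piT T (u, X)).2 : Set W)).Finite) ∧
    -- (b)
    (∀ (u : W) (X : Set B), u ∈ cs.parabolic T → X ⊆ T →
      ((cs.parabolic X : Set W)).Finite → cs.piT T (u, X) = (u, X)) ∧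
    -- (c)
    (∀ (w : W), w ∈ cs.parabolic T → ∀ (u : W) (X : Set B),
      cs.piT T (w * u, X) = (w * (cs.piT T (u, X)).1, (cs.piT T (u, X)).2)) ∧
    -- (d)
    (∀ (u v : W) (X Y : Set B), ((cs.parabolic X : Set W)).Finite →
      ((cs.parabolic Y : Set W)).Finite →
      cs.salRel (u, X) (v, Y) → cs.salRel (cs.piT T (u, X)) (cs.piT T (v, Y))) := by
  refine ⟨?_, ?_, ?_, ?_⟩
  · -- (a)
    intro u X hXfin
    refine ⟨mul_leftMinRep_inv_mem cs T u, fun t ht => ht.1, ?_⟩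
    set u₁ := cs.leftMinRep T u with hu₁
    have hconj : ∀ w ∈ cs.parabolic (cs.piT T (u, X)).2, u₁⁻¹ * w * u₁ ∈ cs.parabolic X := by
      intro w hw
      induction hw using Subgroup.closure_induction with
      | mem x hx =>
        obtain ⟨t, ht, rfl⟩ := hx
        exact ht.2
      | one =>
        rw [mul_one, inv_mul_cancel]
        exact Subgroup.one_mem _
      | mul x y hx hy ihx ihy =>
        have e : u₁⁻¹ * (x * y) * u₁ = (u₁⁻¹ * x * u₁) * (u₁⁻¹ * y * u₁) := by group
        rw [e]
        exact mul_mem ihx ihy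
      | inv x hx ihx =>
        have e : u₁⁻¹ * x⁻¹ * u₁ = (u₁⁻¹ * x * u₁)⁻¹ := by group
        rw [e]
        exact inv_mem ihx
    have hsub : ((cs.parabolic (cs.piT T (u, X)).2 : Set W))
        ⊆ (fun x => u₁ * x * u₁⁻¹) '' (cs.parabolic X : Set W) := by
      intro w hw
      exact ⟨u₁⁻¹ * w * u₁, hconj w hw, by group⟩
    exact (hXfin.image _).subset hsub
  · -- (b)
    intro u X huT hXT hfin
    have hmin1 : cs.leftMinRep T u = 1 := by
      have h1 : cs.length (cs.leftMinRep T u) ≤ cs.length (u⁻¹ * u) :=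
        leftMinRep_le cs T u (inv_mem huT)
      rw [inv_mul_cancel, cs.length_one] at h1
      exact cs.length_eq_zero_iff.mp (Nat.le_zero.mp h1)
    unfold CoxeterSystem.piT
    rw [hmin1]
    refine Prod.ext ?_ ?_
    · show u * 1⁻¹ = u
      rw [inv_one, mul_one]
    · show {t ∈ T | 1⁻¹ * cs.simple t * 1 ∈ cs.parabolic X} = X
      ext t
      constructor
      · rintro ⟨htT, hmem⟩
        rw [inv_one, one_mul, mul_one] at hmem
        exact simple_mem_parabolic cs hmem
      · intro ht
        refine ⟨hXT ht, ?_⟩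
        rw [inv_one, one_mul, mul_one]
        exact simple_mem_parabolic_of_mem cs ht
  · -- (c)
    intro w hw u X
    unfold CoxeterSystem.piT
    rw [leftMinRep_mul_of_mem cs hw u]
    exact Prod.ext (by rw [mul_assoc]) rfl
  · -- (d)
    intro u v X Y hXfin hYfin hrel
    obtain ⟨hXY, hyY, hymin⟩ := hrel
    have hv₁min := isLeftMin_leftMinRep cs T v
    set v₁ := cs.leftMinRep T v with hv₁
    set y : W := v⁻¹ * u with hy
    obtain ⟨ωy, hωyY, hωyw⟩ := (mem_parabolic_iff_exists_word cs).mp hyY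
    have hKL := key_lemma cs hv₁min ωy hωyY
    rw [← hωyw] at hKL
    have huvy : u = (v * v₁⁻¹) * (v₁ * y) := by rw [hy]; group
    have hv0 : v * v₁⁻¹ ∈ cs.parabolic T := mul_leftMinRep_inv_mem cs T v
    have hminrepeq : cs.leftMinRep T u = cs.leftMinRep T (v₁ * y) := by
      rw [huvy, leftMinRep_mul_of_mem cs hv0]
    rw [← hminrepeq] at hKL
    set u₁ := cs.leftMinRep T u with hu₁
    have hu₁min := isLeftMin_leftMinRep cs T u
    obtain ⟨hcY, hzY₀⟩ := hKL
    have hzeq : v₁ * y * u₁⁻¹ = (cs.piT T (v, Y)).1⁻¹ * (cs.piT T (u, X)).1 := by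
      show v₁ * y * u₁⁻¹ = (v * v₁⁻¹)⁻¹ * (u * u₁⁻¹)
      rw [hy]
      group
    set z : W := v₁ * y * u₁⁻¹ with hz
    have hY₀T : {t ∈ T | v₁⁻¹ * cs.simple t * v₁ ∈ cs.parabolic Y} ⊆ T := fun t ht => ht.1
    have hzT : z ∈ cs.parabolic T := parabolic_mono cs hY₀T hzY₀
    refine ⟨?_, ?_, ?_⟩
    · -- X₀ ⊆ Y₀
      rintro t ⟨htT, htX⟩
      refine ⟨htT, ?_⟩
      have e : v₁⁻¹ * cs.simple t * v₁
          = (v₁⁻¹ * u₁) * (u₁⁻¹ * cs.simple t * u₁) * (v₁⁻¹ * u₁)⁻¹ := by group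
      rw [e]
      exact mul_mem (mul_mem hcY (parabolic_mono cs hXY htX)) (inv_mem hcY)
    · -- v₀⁻¹ u₀ ∈ W_{Y₀}
      show (cs.piT T (v, Y)).1⁻¹ * (cs.piT T (u, X)).1 ∈ _
      rw [← hzeq]
      exact hzY₀
    · -- minimality
      show cs.IsMinimalCosetRep _ ((cs.piT T (v, Y)).1⁻¹ * (cs.piT T (u, X)).1)
      rw [← hzeq]
      apply isMinimalCosetRep_of_simple
      rintro t ⟨htT, htX⟩
      -- N-function computation
      set x : W := u₁⁻¹ * cs.simple t * u₁ with hx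
      have hxrefl : cs.IsReflection x := ⟨u₁⁻¹, t, by rw [hx]; group⟩
      have hn1 : nn cs z (cs.simple t)
          = nn cs u₁⁻¹ (cs.simple t) + nn cs (v₁ * y) (u₁⁻¹ * cs.simple t * (u₁⁻¹)⁻¹) := by
        rw [hz]
        exact nn_cocycle cs (v₁ * y) u₁⁻¹ (cs.simple t)
      rw [inv_inv, ← hx] at hn1
      have hn2 : nn cs (v₁ * y) x = nn cs y x + nn cs v₁ (y * x * y⁻¹) :=
        nn_cocycle cs v₁ y x
      have ha : nn cs u₁⁻¹ (cs.simple t) = 0 := by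
        apply not_isRightInversion_of_le cs (cs.isReflection_simple t)
        have e : cs.length (u₁⁻¹ * cs.simple t) = cs.length (cs.simple t * u₁) := by
          rw [← cs.length_inv (u₁⁻¹ * cs.simple t), mul_inv_rev, cs.inv_simple, inv_inv]
        rw [e, cs.length_inv]
        exact hu₁min (cs.simple t) (simple_mem_parabolic_of_mem cs htT)
      have hb : nn cs y x = 0 := by
        apply not_isRightInversion_of_le cs hxrefl
        exact hymin x htX
      have hc : nn cs v₁ (y * x * y⁻¹) = 0 := by
        have hrrefl : cs.IsReflection (y * x * y⁻¹) := ⟨y * u₁⁻¹, t, by rw [hx]; group⟩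
        apply not_isRightInversion_of_le cs hrrefl
        have e : v₁ * (y * x * y⁻¹) = (z * cs.simple t * z⁻¹) * v₁ := by
          rw [hz, hx]; group
        rw [e]
        have hq : z * cs.simple t * z⁻¹ ∈ cs.parabolic T :=
          mul_mem (mul_mem hzT (simple_mem_parabolic_of_mem cs htT)) (inv_mem hzT)
        exact hv₁min _ hq
      have hzero : nn cs z (cs.simple t) = 0 := by
        rw [hn1, hn2, ha, hb, hc]
        decide
      have hne := cs.length_mul_simple_ne z t
      rcases lt_or_gt_of_ne hne with hlt | hgt
      · exfalso
        have := (isRightInversion_iff_nn_eq_one cs (cs.isReflection_simple t)).mp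
          ⟨cs.isReflection_simple t, hlt⟩
        rw [hzero] at this
        exact absurd this (by decide)
      · exact hgt
end
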